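/- arXiv:1101.1990 — 6 statements merged into one kernel-verified Lean document; each statement's English description precedes it below -/
import Mathlib

section
/- Let A₀ and A₁ be real normed linear spaces such that A₀ is continuously embedded in A₁ (i.e., A₀ ⊆ A₁ and there is a constant C > 0 with ‖a‖_{A₁} ≤ C‖a‖_{A₀} for all a ∈ A₀), and let M₊ be a seminormed nonnegative cone in A₀ that is compactly embedded in A₀. Then for every η > 0 there exists a constant c_η > 0 such that ‖u − v‖_{A₀} ≤ η([u] + [v]) + c_η‖u − v‖_{A₁} for all u, v ∈ M₊. -/
/-!
Both sides of the inequality are positively homogeneous in `(u, v)`, so it suffices to treat pairs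
with `[u] + [v] = 1`. If no constant works there, there are such pairs `(uₙ, vₙ)` with
`‖uₙ - vₙ‖_{A₀} > η` and `‖uₙ - vₙ‖_{A₁} → 0`. By the compact embedding a subsequence of each
converges in `A₀`, to `p` and `q` say; continuity and injectivity of `A₀ → A₁` force `p = q`,
so `‖uₙ - vₙ‖_{A₀} → 0` along the subsequence, contradicting `‖uₙ - vₙ‖_{A₀} > η`.
-/

open Filter Topology

def IsSeqCompactOnBounded {X : Type*} [TopologicalSpace X] (S : Set X) (ν : X → ℝ) : Prop :=
  ∀ a : ℕ → X, (∀ n, a n ∈ S) → (∃ K : ℝ, ∀ n, ν (a n) ≤ K) →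
    ∃ (ψ : ℕ → ℕ) (l : X), StrictMono ψ ∧ Tendsto (fun n => a (ψ n)) atTop (𝓝 l)

theorem IsSeqCompactOnBounded.exists_strictMono_tendsto_pair {X : Type*} [TopologicalSpace X]
    {S : Set X} {ν : X → ℝ} (hS : IsSeqCompactOnBounded S ν) {u v : ℕ → X}
    (hu : ∀ n, u n ∈ S) (hv : ∀ n, v n ∈ S) {K : ℝ} (huK : ∀ n, ν (u n) ≤ K)
    (hvK : ∀ n, ν (v n) ≤ K) :
    ∃ (φ : ℕ → ℕ) (p q : X), StrictMono φ ∧ Tendsto (fun n => u (φ n)) atTop (𝓝 p) ∧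
      Tendsto (fun n => v (φ n)) atTop (𝓝 q) := by
  obtain ⟨ψ, p, hψ, hp⟩ := hS u hu ⟨K, huK⟩
  obtain ⟨ψ', q, hψ', hq⟩ := hS (fun n => v (ψ n)) (fun n => hv _) ⟨K, fun n => hvK _⟩
  exact ⟨ψ ∘ ψ', p, q, hψ.comp hψ', hp.comp hψ'.tendsto_atTop, hq⟩

section

variable {E F : Type*} [NormedAddCommGroup E] {S : Set E} {ν : E → ℝ}

theorem nonneg_of_norm_le_mul {K₀ : ℝ} (hK₀ : 0 < K₀) (hK : ∀ φ ∈ S, ‖φ‖ ≤ K₀ * ν φ) {φ : E}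
    (hφ : φ ∈ S) : 0 ≤ ν φ :=
  nonneg_of_mul_nonneg_right ((norm_nonneg φ).trans (hK φ hφ)) hK₀

theorem norm_sub_le_mul_add {K₀ : ℝ} (hK : ∀ φ ∈ S, ‖φ‖ ≤ K₀ * ν φ) {u v : E} (hu : u ∈ S)
    (hv : v ∈ S) : ‖u - v‖ ≤ K₀ * (ν u + ν v) :=
  calc ‖u - v‖ ≤ ‖u‖ + ‖v‖ := norm_sub_le u v
    _ ≤ K₀ * ν u + K₀ * ν v := add_le_add (hK u hu) (hK v hv)
    _ = K₀ * (ν u + ν v) := (mul_add _ _ _).symm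

variable [NormedSpace ℝ E] [NormedAddCommGroup F] [NormedSpace ℝ F]

theorem IsSeqCompactOnBounded.exists_strictMono_tendsto_sub_zero (hS : IsSeqCompactOnBounded S ν)
    {J : E →L[ℝ] F} (hJ : Function.Injective J) {u v : ℕ → E} (hu : ∀ n, u n ∈ S)
    (hv : ∀ n, v n ∈ S) {K : ℝ} (huK : ∀ n, ν (u n) ≤ K) (hvK : ∀ n, ν (v n) ≤ K)
    (hJuv : Tendsto (fun n => J (u n) - J (v n)) atTop (𝓝 0)) :
    ∃ φ : ℕ → ℕ, StrictMono φ ∧ Tendsto (fun n => u (φ n) - v (φ n)) atTop (𝓝 0) := by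
  obtain ⟨φ, p, q, hφ, hp, hq⟩ := hS.exists_strictMono_tendsto_pair hu hv huK hvK
  have hJpq : J (p - q) = 0 := by
    refine tendsto_nhds_unique ?_ (hJuv.comp hφ.tendsto_atTop)
    rw [map_sub]
    exact ((J.continuous.tendsto p).comp hp).sub ((J.continuous.tendsto q).comp hq)
  have hpq : p - q = 0 := hJ (by rw [hJpq, map_zero])
  exact ⟨φ, hφ, hpq ▸ hp.sub hq⟩

theorem norm_sub_le_of_forall_add_eq_one {K₀ : ℝ} (hK₀ : 0 < K₀)
    (hK : ∀ φ ∈ S, ‖φ‖ ≤ K₀ * ν φ) (hcone : ∀ φ ∈ S, ∀ c : ℝ, 0 ≤ c → c • φ ∈ S)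
    (hνhom : ∀ φ ∈ S, ∀ c : ℝ, 0 ≤ c → ν (c • φ) = c * ν φ) (J : E →ₗ[ℝ] F) {η c : ℝ}
    (h : ∀ u ∈ S, ∀ v ∈ S, ν u + ν v = 1 → ‖u - v‖ ≤ η + c * ‖J u - J v‖) :
    ∀ u ∈ S, ∀ v ∈ S, ‖u - v‖ ≤ η * (ν u + ν v) + c * ‖J u - J v‖ := by
  intro u hu v hv
  set d := ν u + ν v
  have hd0 : 0 ≤ d := add_nonneg (nonneg_of_norm_le_mul hK₀ hK hu) (nonneg_of_norm_le_mul hK₀ hK hv)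
  rcases hd0.eq_or_lt with hd | hd
  · have huv : u = v := sub_eq_zero.mp <| norm_le_zero_iff.mp <|
      (norm_sub_le_mul_add hK hu hv).trans_eq (by rw [show ν u + ν v = 0 from hd.symm, mul_zero])
    rw [← hd, huv]
    simp
  · have hd' : 0 ≤ d⁻¹ := inv_nonneg.mpr hd.le
    have hscaled := h _ (hcone u hu _ hd') _ (hcone v hv _ hd') <| by
      rw [hνhom u hu _ hd', hνhom v hv _ hd', ← mul_add, inv_mul_cancel₀ hd.ne']
    rw [map_smul, map_smul, ← smul_sub, ← smul_sub, norm_smul, norm_smul, Real.norm_eq_abs,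
      abs_of_nonneg hd'] at hscaled
    calc ‖u - v‖ = d * (d⁻¹ * ‖u - v‖) := (mul_inv_cancel_left₀ hd.ne' _).symm
      _ ≤ d * (η + c * (d⁻¹ * ‖J u - J v‖)) := mul_le_mul_of_nonneg_left hscaled hd.le
      _ = η * d + c * ‖J u - J v‖ := by field_simp

end

theorem stmt0_general
    {A₀ A₁ : Type*} [NormedAddCommGroup A₀] [NormedSpace ℝ A₀]
    [NormedAddCommGroup A₁] [NormedSpace ℝ A₁]
    -- A₀ is continuously embedded in A₁ via the injective linear map `j`
    (j : A₀ →ₗ[ℝ] A₁) (hj : Function.Injective j)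
    (C : ℝ) (hjC : ∀ a : A₀, ‖j a‖ ≤ C * ‖a‖)
    -- M₊ = S is a seminormed nonnegative cone in A₀ with seminorm ν
    (S : Set A₀) (ν : A₀ → ℝ)
    (hcone : ∀ φ ∈ S, ∀ c : ℝ, 0 ≤ c → c • φ ∈ S)
    (hνhom : ∀ φ ∈ S, ∀ c : ℝ, 0 ≤ c → ν (c • φ) = c * ν φ)
    -- M₊ is embedded in A₀
    (hemb : ∃ K₀ > 0, ∀ φ ∈ S, ‖φ‖ ≤ K₀ * ν φ)
    -- the embedding of M₊ in A₀ is compact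
    (hcpt : ∀ a : ℕ → A₀, (∀ n, a n ∈ S) → (∃ K : ℝ, ∀ n, ν (a n) ≤ K) →
      ∃ (ψ : ℕ → ℕ) (l : A₀), StrictMono ψ ∧
        Tendsto (fun n => a (ψ n)) atTop (𝓝 l)) :
    ∀ η > (0 : ℝ), ∃ cη > (0 : ℝ), ∀ u ∈ S, ∀ v ∈ S,
      ‖u - v‖ ≤ η * (ν u + ν v) + cη * ‖j u - j v‖ := by
  obtain ⟨K₀, hK₀, hK⟩ := hemb
  intro η hη
  by_contra! hcon
  have hviolated : ∀ n : ℕ, ∃ u ∈ S, ∃ v ∈ S,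
      ν u + ν v = 1 ∧ η + (n + 1) * ‖j u - j v‖ < ‖u - v‖ := fun n => by
    by_contra! h
    obtain ⟨u, hu, v, hv, hlt⟩ := hcon (n + 1) (by positivity)
    exact hlt.not_ge (norm_sub_le_of_forall_add_eq_one hK₀ hK hcone hνhom j h u hu v hv)
  choose u hu v hv hsum hlt using hviolated
  have hν : ∀ φ ∈ S, 0 ≤ ν φ := fun _ => nonneg_of_norm_le_mul hK₀ hK
  have hj_le : ∀ n : ℕ, ‖j (u n) - j (v n)‖ ≤ K₀ / (n + 1) := fun n => by
    have := norm_sub_le_mul_add hK (hu n) (hv n)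
    rw [hsum n, mul_one] at this
    rw [le_div_iff₀ (by positivity), mul_comm]
    linarith [hlt n]
  have hj_tendsto : Tendsto (fun n => j (u n) - j (v n)) atTop (𝓝 0) :=
    squeeze_zero_norm hj_le <| by
      simpa only [Function.comp_def, Nat.cast_add_one] using
        (tendsto_const_div_atTop_nhds_zero_nat K₀).comp (tendsto_add_atTop_nat 1)
  obtain ⟨φ, -, hφ⟩ := IsSeqCompactOnBounded.exists_strictMono_tendsto_sub_zero
    (J := j.mkContinuous C hjC) hcpt hj hu hv (K := 1)
    (fun n => by linarith [hsum n, hν _ (hv n)]) (fun n => by linarith [hsum n, hν _ (hu n)])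
    hj_tendsto
  have : η ≤ 0 := ge_of_tendsto' (by simpa using hφ.norm) fun n =>
    le_of_add_le_of_nonneg_left (hlt (φ n)).le (by positivity)
  linarith

/-- Ehrling-type lemma for seminormed nonnegative cones (Lemma 1 of Dubinskiĭ). -/
theorem stmt0
    {A₀ A₁ : Type*} [NormedAddCommGroup A₀] [NormedSpace ℝ A₀]
    [NormedAddCommGroup A₁] [NormedSpace ℝ A₁]
    -- A₀ is continuously embedded in A₁ via the injective linear map `j`
    (j : A₀ →ₗ[ℝ] A₁) (hj : Function.Injective j)
    (C : ℝ) (hC : 0 < C) (hjC : ∀ a : A₀, ‖j a‖ ≤ C * ‖a‖)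
    -- M₊ = S is a seminormed nonnegative cone in A₀ with seminorm ν
    (S : Set A₀) (ν : A₀ → ℝ)
    (hcone : ∀ φ ∈ S, ∀ c : ℝ, 0 ≤ c → c • φ ∈ S)
    (hν0 : ∀ φ ∈ S, 0 ≤ ν φ)
    (hνeq0 : ∀ φ ∈ S, (ν φ = 0 ↔ φ = 0))
    (hνhom : ∀ φ ∈ S, ∀ c : ℝ, 0 ≤ c → ν (c • φ) = c * ν φ)
    -- M₊ is embedded in A₀
    (hemb : ∃ K₀ > 0, ∀ φ ∈ S, ‖φ‖ ≤ K₀ * ν φ)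
    -- the embedding of M₊ in A₀ is compact
    (hcpt : ∀ a : ℕ → A₀, (∀ n, a n ∈ S) → (∃ K : ℝ, ∀ n, ν (a n) ≤ K) →
      ∃ (ψ : ℕ → ℕ) (l : A₀), StrictMono ψ ∧
        Tendsto (fun n => a (ψ n)) atTop (𝓝 l)) :
    ∀ η > (0 : ℝ), ∃ cη > (0 : ℝ), ∀ u ∈ S, ∀ v ∈ S,
      ‖u - v‖ ≤ η * (ν u + ν v) + cη * ‖j u - j v‖ :=
  stmt0_general j hj C hjC S ν hcone hνhom hemb hcpt
end

section
/- Let T > 0, let A₁ be a real Banach space, let M₊ be a seminormed nonnegative cone in A₁ that is (continuously) embedded in A₁, and let 1 ≤ p ≤ ∞, 1 ≤ p₁ ≤ ∞. Then every φ ∈ Y₊ is almost everywhere on [0,T] equal to a continuous function from [0,T] to A₁, and there exists a constant C > 0, independent of φ, such that (identifying φ with its continuous representative) max_{t ∈ [0,T]} ‖φ(t)‖_{A₁} ≤ C [φ]_{Y₊}; that is, Y₊ is continuously embedded in C([0,T]; A₁). -/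
open Filter Topology MeasureTheory
open scoped ENNReal

/-!
Take `ψ t = φ 0 + ∫₀ᵗ dφ/ds`, a continuous representative of `φ`. For `s, t ∈ [0,T]` the
difference `ψ t - ψ s` is bounded by `‖dφ/dt‖_{L¹}`, while for a.e. `s` the embedding gives
`‖ψ s‖ ≤ K₀ [φ(s)]`. Averaging `‖ψ t‖ ≤ K₀ [φ(s)] + ‖dφ/dt‖_{L¹}` over `s ∈ (0,T)` bounds `‖ψ t‖`
by `L¹` norms, and Hölder's inequality on the finite interval bounds those by the `L^p` and
`L^{p₁}` norms.
-/

lemma Real.rpow_le_max_one_self {x e : ℝ} (hx : 0 ≤ x) (he₀ : 0 ≤ e) (he₁ : e ≤ 1) :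
    x ^ e ≤ max 1 x := by
  rcases le_total x 1 with hx1 | hx1
  · exact (Real.rpow_le_one hx hx1 he₀).trans (le_max_left _ _)
  · exact (Real.rpow_le_self_of_one_le hx1 he₁).trans (le_max_right _ _)

section Holder

variable {α E : Type*} [MeasurableSpace α] [NormedAddCommGroup E] {μ : Measure α}
  [IsFiniteMeasure μ] {f : α → E} {q : ℝ≥0∞}

lemma integral_norm_le_max_one_mul_eLpNorm (hq : 1 ≤ q) (hf : MemLp f q μ) :
    ∫ x, ‖f x‖ ∂μ ≤ max 1 (μ.real Set.univ) * (eLpNorm f q μ).toReal := by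
  set e := 1 - 1 / q.toReal
  have he : 0 ≤ e ∧ e ≤ 1 := by
    have hinv : 1 / q.toReal ≤ 1 := by
      rcases eq_or_ne q ⊤ with rfl | hq_top
      · simp
      · have := ENNReal.toReal_mono hq_top hq
        rw [ENNReal.toReal_one] at this
        exact div_le_one_of_le₀ this (zero_le_one.trans this)
    constructor <;> linarith [show 0 ≤ 1 / q.toReal by positivity]
  have hHolder : eLpNorm f 1 μ ≤ eLpNorm f q μ * μ Set.univ ^ e := by
    simpa only [ENNReal.toReal_one, div_one] using
      eLpNorm_le_eLpNorm_mul_rpow_measure_univ hq hf.aestronglyMeasurable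
  have hL1 : ENNReal.ofReal (∫ x, ‖f x‖ ∂μ) = eLpNorm f 1 μ := by
    rw [ofReal_integral_norm_eq_lintegral_enorm (hf.integrable hq),
      eLpNorm_one_eq_lintegral_enorm]
  calc ∫ x, ‖f x‖ ∂μ = (eLpNorm f 1 μ).toReal := by
        rw [← hL1, ENNReal.toReal_ofReal (integral_nonneg fun _ ↦ norm_nonneg _)]
    _ ≤ (eLpNorm f q μ * μ Set.univ ^ e).toReal :=
        ENNReal.toReal_mono (ENNReal.mul_ne_top hf.eLpNorm_ne_top
          (ENNReal.rpow_ne_top_of_nonneg he.1 (measure_ne_top μ _))) hHolder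
    _ = μ.real Set.univ ^ e * (eLpNorm f q μ).toReal := by
        rw [ENNReal.toReal_mul, ← ENNReal.toReal_rpow, mul_comm, measureReal_def]
    _ ≤ max 1 (μ.real Set.univ) * (eLpNorm f q μ).toReal := by
        gcongr
        exact Real.rpow_le_max_one_self measureReal_nonneg he.1 he.2

end Holder

lemma norm_intervalIntegral_sub_le {E : Type*} [NormedAddCommGroup E] [NormedSpace ℝ E]
    {w : ℝ → E} {a b s t : ℝ} (hw : IntegrableOn w (Set.Ioc a b))
    (hs : s ∈ Set.Icc a b) (ht : t ∈ Set.Icc a b) :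
    ‖(∫ u in a..t, w u) - ∫ u in a..s, w u‖ ≤ ∫ u in Set.Ioc a b, ‖w u‖ := by
  have hab : IntervalIntegrable w volume a b :=
    (intervalIntegrable_iff_integrableOn_Ioc_of_le (hs.1.trans hs.2)).2 hw
  have hsub : ∀ {x}, x ∈ Set.Icc a b → Set.uIcc a x ⊆ Set.uIcc a b := fun hx ↦
    Set.uIcc_subset_uIcc Set.left_mem_uIcc (Set.Icc_subset_uIcc hx)
  rw [intervalIntegral.integral_interval_sub_left (hab.mono_set (hsub ht))
    (hab.mono_set (hsub hs))]
  refine intervalIntegral.norm_integral_le_integral_norm_uIoc.trans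
    (setIntegral_mono_set hw.norm (ae_of_all _ fun _ ↦ norm_nonneg _) ?_)
  exact (Set.Ioc_subset_Ioc (le_min hs.1 ht.1) (max_le hs.2 ht.2)).eventuallyLE

lemma mul_norm_add_intervalIntegral_le {E : Type*} [NormedAddCommGroup E] [NormedSpace ℝ E]
    {x₀ : E} {w : ℝ → E} {g : ℝ → ℝ} {a b t : ℝ} (hw : IntegrableOn w (Set.Ioc a b))
    (hg : IntegrableOn g (Set.Ioc a b))
    (hbound : ∀ᵐ s ∂volume.restrict (Set.Ioc a b), ‖x₀ + ∫ u in a..s, w u‖ ≤ g s)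
    (ht : t ∈ Set.Icc a b) :
    (b - a) * ‖x₀ + ∫ u in a..t, w u‖ ≤
      (∫ s in Set.Ioc a b, g s) + (b - a) * ∫ s in Set.Ioc a b, ‖w s‖ := by
  set I := ∫ s in Set.Ioc a b, ‖w s‖
  have hosc : ∀ᵐ s ∂volume.restrict (Set.Ioc a b), ‖x₀ + ∫ u in a..t, w u‖ - I ≤ g s := by
    filter_upwards [hbound, ae_restrict_mem measurableSet_Ioc] with s hs hs_mem
    rw [sub_le_iff_le_add]
    calc ‖x₀ + ∫ u in a..t, w u‖
        ≤ ‖x₀ + ∫ u in a..s, w u‖ + ‖(∫ u in a..t, w u) - ∫ u in a..s, w u‖ := by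
          rw [← add_sub_add_left_eq_sub _ _ x₀]
          exact norm_le_norm_add_norm_sub' _ _
      _ ≤ g s + I := add_le_add hs
          (norm_intervalIntegral_sub_le hw (Set.Ioc_subset_Icc_self hs_mem) ht)
  have := setIntegral_mono_ae_restrict (integrableOn_const measure_Ioc_lt_top.ne) hg hosc
  rw [setIntegral_const, Real.volume_real_Ioc_of_le (ht.1.trans ht.2), smul_eq_mul] at this
  linarith

theorem stmt1_general
    {A₁ : Type*} [NormedAddCommGroup A₁] [NormedSpace ℝ A₁]
    (T : ℝ) (hT : 0 < T)
    -- M₊ = S is a seminormed nonnegative cone in A₁ with seminorm ν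
    (S : Set A₁) (ν : A₁ → ℝ)
    -- M₊ is (continuously) embedded in A₁
    (hemb : ∃ K₀ > (0 : ℝ), ∀ φ ∈ S, ‖φ‖ ≤ K₀ * ν φ)
    (p p₁ : ℝ≥0∞) (hp : 1 ≤ p) (hp₁ : 1 ≤ p₁) :
    ∃ C > (0 : ℝ), ∀ φ w : ℝ → A₁,
      -- φ maps [0,T] into M₊
      (∀ t ∈ Set.Icc (0 : ℝ) T, φ t ∈ S) →
      -- φ is strongly measurable on (0,T)
      AEStronglyMeasurable φ (volume.restrict (Set.Ioc (0 : ℝ) T)) →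
      -- t ↦ [φ(t)] is measurable with finite L^p(0,T) norm
      AEMeasurable (fun t => ν (φ t)) (volume.restrict (Set.Ioc (0 : ℝ) T)) →
      eLpNorm (fun t => ν (φ t)) p (volume.restrict (Set.Ioc (0 : ℝ) T)) < ⊤ →
      -- w = dφ/dt is Bochner integrable on (0,T) with finite L^{p₁}(0,T;A₁) norm
      IntegrableOn w (Set.Ioc (0 : ℝ) T) →
      eLpNorm w p₁ (volume.restrict (Set.Ioc (0 : ℝ) T)) < ⊤ →
      -- φ(t) = φ(0) + ∫₀ᵗ w(s) ds for a.e. t ∈ [0,T]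
      (∀ᵐ t ∂volume.restrict (Set.Icc (0 : ℝ) T),
        φ t = φ 0 + ∫ s in (0 : ℝ)..t, w s) →
      -- conclusion: φ has a continuous representative ψ on [0,T] with
      -- max_{t∈[0,T]} ‖ψ(t)‖ ≤ C [φ]_{Y₊}
      ∃ ψ : ℝ → A₁, ContinuousOn ψ (Set.Icc (0 : ℝ) T) ∧
        (∀ᵐ t ∂volume.restrict (Set.Icc (0 : ℝ) T), φ t = ψ t) ∧
        ∀ t ∈ Set.Icc (0 : ℝ) T,
          ‖ψ t‖ ≤ C *
            ((eLpNorm (fun t => ν (φ t)) p (volume.restrict (Set.Ioc (0 : ℝ) T))).toReal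
              + (eLpNorm w p₁ (volume.restrict (Set.Ioc (0 : ℝ) T))).toReal) := by
  obtain ⟨K₀, hK₀, hK⟩ := hemb
  set M := max 1 T
  refine ⟨(K₀ + T) * M / T, by positivity, ?_⟩
  intro φ w hφS _ hνmeas hνLp hw hwLp hae
  set μ := volume.restrict (Set.Ioc (0 : ℝ) T)
  set B := (eLpNorm (fun t => ν (φ t)) p μ).toReal
  set D := (eLpNorm w p₁ μ).toReal
  have hμ : μ.real Set.univ = T := by simp [μ, hT.le]
  have hνLp' : MemLp (fun t => ν (φ t)) p μ := ⟨hνmeas.aestronglyMeasurable, hνLp⟩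
  have hνL1 : ∫ s, ‖ν (φ s)‖ ∂μ ≤ M * B := by
    simpa only [hμ] using integral_norm_le_max_one_mul_eLpNorm hp hνLp'
  have hwL1 : ∫ s, ‖w s‖ ∂μ ≤ M * D := by
    simpa only [hμ] using
      integral_norm_le_max_one_mul_eLpNorm (μ := μ) hp₁ ⟨hw.aestronglyMeasurable, hwLp⟩
  have hψ : ContinuousOn (fun t ↦ φ 0 + ∫ s in (0 : ℝ)..t, w s) (Set.Icc 0 T) := by
    have := intervalIntegral.continuousOn_primitive_interval (a := 0) (b := T) (μ := volume)
      (f := w) (by rwa [Set.uIcc_of_le hT.le, integrableOn_Icc_iff_integrableOn_Ioc])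
    exact continuousOn_const.add (Set.uIcc_of_le hT.le ▸ this)
  refine ⟨_, hψ, hae, fun t ht ↦ ?_⟩
  have hbound : ∀ᵐ s ∂μ, ‖φ 0 + ∫ u in (0 : ℝ)..s, w u‖ ≤ K₀ * ‖ν (φ s)‖ := by
    filter_upwards [ae_restrict_of_ae_restrict_of_subset Set.Ioc_subset_Icc_self hae,
      ae_restrict_mem measurableSet_Ioc] with s hφs hs
    rw [← hφs]
    exact (hK _ (hφS s (Set.Ioc_subset_Icc_self hs))).trans
      (mul_le_mul_of_nonneg_left (Real.le_norm_self _) hK₀.le)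
  have havg := mul_norm_add_intervalIntegral_le hw
    ((hνLp'.integrable hp).norm.const_mul K₀) hbound ht
  rw [sub_zero, integral_const_mul] at havg
  have hM : 0 ≤ M := zero_le_one.trans (le_max_left _ _)
  rw [div_mul_eq_mul_div, le_div_iff₀ hT]
  calc _ ≤ K₀ * ∫ s, ‖ν (φ s)‖ ∂μ + T * ∫ s, ‖w s‖ ∂μ := by linarith
    _ ≤ K₀ * (M * B) + T * (M * D) := by gcongr
    _ ≤ (K₀ + T) * M * (B + D) := by
        linarith [mul_nonneg (mul_nonneg hK₀.le hM) (ENNReal.toReal_nonneg : 0 ≤ D),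
          mul_nonneg (mul_nonneg hT.le hM) (ENNReal.toReal_nonneg : 0 ≤ B)]

/-- The seminormed nonnegative cone `Y₊` is continuously embedded in `C([0,T]; A₁)`:
every element of `Y₊` has a continuous representative on `[0,T]`, whose sup-norm is
bounded by a constant multiple of its `Y₊`-seminorm. -/
theorem stmt1
    {A₁ : Type*} [NormedAddCommGroup A₁] [NormedSpace ℝ A₁] [CompleteSpace A₁]
    (T : ℝ) (hT : 0 < T)
    -- M₊ = S is a seminormed nonnegative cone in A₁ with seminorm ν
    (S : Set A₁) (ν : A₁ → ℝ)
    (hcone : ∀ φ ∈ S, ∀ c : ℝ, 0 ≤ c → c • φ ∈ S)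
    (hν0 : ∀ φ ∈ S, 0 ≤ ν φ)
    (hνeq0 : ∀ φ ∈ S, (ν φ = 0 ↔ φ = 0))
    (hνhom : ∀ φ ∈ S, ∀ c : ℝ, 0 ≤ c → ν (c • φ) = c * ν φ)
    -- M₊ is (continuously) embedded in A₁
    (hemb : ∃ K₀ > (0 : ℝ), ∀ φ ∈ S, ‖φ‖ ≤ K₀ * ν φ)
    (p p₁ : ℝ≥0∞) (hp : 1 ≤ p) (hp₁ : 1 ≤ p₁) :
    ∃ C > (0 : ℝ), ∀ φ w : ℝ → A₁,
      -- φ maps [0,T] into M₊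
      (∀ t ∈ Set.Icc (0 : ℝ) T, φ t ∈ S) →
      -- φ is strongly measurable on (0,T)
      AEStronglyMeasurable φ (volume.restrict (Set.Ioc (0 : ℝ) T)) →
      -- t ↦ [φ(t)] is measurable with finite L^p(0,T) norm
      AEMeasurable (fun t => ν (φ t)) (volume.restrict (Set.Ioc (0 : ℝ) T)) →
      eLpNorm (fun t => ν (φ t)) p (volume.restrict (Set.Ioc (0 : ℝ) T)) < ⊤ →
      -- w = dφ/dt is Bochner integrable on (0,T) with finite L^{p₁}(0,T;A₁) norm
      IntegrableOn w (Set.Ioc (0 : ℝ) T) →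
      eLpNorm w p₁ (volume.restrict (Set.Ioc (0 : ℝ) T)) < ⊤ →
      -- φ(t) = φ(0) + ∫₀ᵗ w(s) ds for a.e. t ∈ [0,T]
      (∀ᵐ t ∂volume.restrict (Set.Icc (0 : ℝ) T),
        φ t = φ 0 + ∫ s in (0 : ℝ)..t, w s) →
      -- conclusion: φ has a continuous representative ψ on [0,T] with
      -- max_{t∈[0,T]} ‖ψ(t)‖ ≤ C [φ]_{Y₊}
      ∃ ψ : ℝ → A₁, ContinuousOn ψ (Set.Icc (0 : ℝ) T) ∧
        (∀ᵐ t ∂volume.restrict (Set.Icc (0 : ℝ) T), φ t = ψ t) ∧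
        ∀ t ∈ Set.Icc (0 : ℝ) T,
          ‖ψ t‖ ≤ C *
            ((eLpNorm (fun t => ν (φ t)) p (volume.restrict (Set.Ioc (0 : ℝ) T))).toReal
              + (eLpNorm w p₁ (volume.restrict (Set.Ioc (0 : ℝ) T))).toReal) :=
  stmt1_general T hT S ν hemb p p₁ hp hp₁
end

section
/- Let T > 0, let A₁ be a real Banach space, let 1 ≤ p < ∞, and let u : [0,T] → A₁ satisfy u(t) = u(0) + ∫₀ᵗ v(s) ds for all t ∈ [0,T], where v : (0,T) → A₁ is Bochner integrable. Let N be a positive integer, h := T/N, t_k := k·h for k = 0,…,N, and choose arbitrary points t'_k ∈ (t_{k−1}, t_k) for k = 1,…,N. Then (Σ_{k=1}^N ∫_{t_{k−1}}^{t_k} ‖u(t) − u(t'_k)‖_{A₁}^p dt)^{1/p} ≤ h^{1/p} ∫₀^T ‖v(t)‖_{A₁} dt. -/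
/-!
On the `k`-th cell `I_k` of the partition, `u t - u t'_k = ∫_{t'_k}^t v`, so
`‖u t - u t'_k‖ ≤ a_k := ∫_{I_k} ‖v‖` and the cell contributes at most `h a_kᵖ`.
Superadditivity of `x ↦ xᵖ` for `p ≥ 1` gives `∑ h a_kᵖ ≤ h (∑ a_k)ᵖ`, and `∑ a_k = ∫₀ᵀ ‖v‖`.
-/

open Filter MeasureTheory Set
open scoped ENNReal

namespace ENNReal

theorem sum_rpow_le_rpow_sum {ι : Type*} (s : Finset ι) (x : ι → ℝ≥0∞) {p : ℝ} (hp : 1 ≤ p) :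
    ∑ i ∈ s, x i ^ p ≤ (∑ i ∈ s, x i) ^ p := by
  classical
  induction s using Finset.induction_on with
  | empty => simp [zero_rpow_of_pos (by linarith : (0 : ℝ) < p)]
  | insert i s hi ih =>
    rw [Finset.sum_insert hi, Finset.sum_insert hi]
    exact (add_le_add le_rfl ih).trans (add_rpow_le_rpow_add _ _ hp)

theorem rpow_sum_const_mul_rpow_le {ι : Type*} (s : Finset ι) (c : ℝ≥0∞) (x : ι → ℝ≥0∞)
    {p : ℝ} (hp : 1 ≤ p) :
    (∑ i ∈ s, c * x i ^ p) ^ (1 / p) ≤ c ^ (1 / p) * ∑ i ∈ s, x i := by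
  have hp0 : 0 < p := by linarith
  rw [← Finset.mul_sum, mul_rpow_of_nonneg _ _ (by positivity)]
  gcongr
  calc (∑ i ∈ s, x i ^ p) ^ (1 / p) ≤ ((∑ i ∈ s, x i) ^ p) ^ (1 / p) :=
        rpow_le_rpow (sum_rpow_le_rpow_sum s x hp) (by positivity)
    _ = ∑ i ∈ s, x i := by rw [one_div, rpow_rpow_inv hp0.ne']

end ENNReal

theorem setLIntegral_ofReal_norm_rpow_le {α E : Type*} [MeasurableSpace α] {μ : Measure α}
    [NormedAddCommGroup E] {f : α → E} {s : Set α} {c p : ℝ} (hp : 0 ≤ p)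
    (hf : ∀ t ∈ s, ‖f t‖ ≤ c) :
    ∫⁻ t in s, ENNReal.ofReal (‖f t‖ ^ p) ∂μ ≤ μ s * ENNReal.ofReal c ^ p := by
  calc ∫⁻ t in s, ENNReal.ofReal (‖f t‖ ^ p) ∂μ ≤ ∫⁻ _ in s, ENNReal.ofReal c ^ p ∂μ := by
        refine setLIntegral_mono measurable_const fun t ht => ?_
        rw [← ENNReal.ofReal_rpow_of_nonneg (norm_nonneg _) hp]
        exact ENNReal.rpow_le_rpow (ENNReal.ofReal_le_ofReal (hf t ht)) hp
    _ = μ s * ENNReal.ofReal c ^ p := by rw [setLIntegral_const, mul_comm]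

theorem sum_setIntegral_Ioc_uniform_partition {E : Type*} [NormedAddCommGroup E]
    [NormedSpace ℝ E] {f : ℝ → E} {h : ℝ} (hh : 0 ≤ h) (N : ℕ)
    (hf : IntegrableOn f (Ioc 0 (N * h))) :
    ∑ k ∈ Finset.Icc 1 N, ∫ t in Ioc (((k : ℝ) - 1) * h) (k * h), f t
      = ∫ t in Ioc 0 (N * h), f t := by
  induction N with
  | zero => simp
  | succ N ih =>
    have hN : ((N + 1 : ℕ) : ℝ) - 1 = N := by push_cast; ring
    have hunion : Ioc 0 (N * h) ∪ Ioc (N * h) ((N + 1 : ℕ) * h) = Ioc 0 ((N + 1 : ℕ) * h) :=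
      Ioc_union_Ioc_eq_Ioc (by positivity) (by gcongr; simp)
    rw [← hunion] at hf ⊢
    rw [Finset.sum_Icc_succ_top (by omega), ih hf.left_of_union, hN, setIntegral_union
      (Ioc_disjoint_Ioc_of_le le_rfl) measurableSet_Ioc hf.left_of_union hf.right_of_union]

theorem intervalIntegrable_of_integrableOn_Ioc {E : Type*} [NormedAddCommGroup E] {f : ℝ → E}
    {a b s t : ℝ} (hf : IntegrableOn f (Ioc a b)) (hs : s ∈ Icc a b) (ht : t ∈ Icc a b) :
    IntervalIntegrable f volume s t :=
  ((intervalIntegrable_iff_integrableOn_Ioc_of_le (hs.1.trans hs.2)).2 hf).mono_set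
    (uIcc_subset_uIcc (Icc_subset_uIcc hs) (Icc_subset_uIcc ht))

section IncrementBound

variable {E : Type*} [NormedAddCommGroup E] [NormedSpace ℝ E] {u v : ℝ → E} {T : ℝ}

theorem sub_eq_intervalIntegral_of_eq_add_integral (hv : IntegrableOn v (Ioc 0 T))
    (hu : ∀ t ∈ Icc 0 T, u t = u 0 + ∫ s in 0..t, v s) {s t : ℝ}
    (hs : s ∈ Icc 0 T) (ht : t ∈ Icc 0 T) :
    u t - u s = ∫ x in s..t, v x := by
  have h0 : (0 : ℝ) ∈ Icc 0 T := left_mem_Icc.2 (hs.1.trans hs.2)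
  rw [hu t ht, hu s hs, add_sub_add_left_eq_sub, intervalIntegral.integral_interval_sub_left
    (intervalIntegrable_of_integrableOn_Ioc hv h0 ht)
    (intervalIntegrable_of_integrableOn_Ioc hv h0 hs)]

theorem norm_sub_le_setIntegral_norm_of_eq_add_integral (hv : IntegrableOn v (Ioc 0 T))
    (hu : ∀ t ∈ Icc 0 T, u t = u 0 + ∫ s in 0..t, v s) {a b s t : ℝ}
    (ha : 0 ≤ a) (hb : b ≤ T) (hs : s ∈ Icc a b) (ht : t ∈ Icc a b) :
    ‖u t - u s‖ ≤ ∫ x in Ioc a b, ‖v x‖ := by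
  have hab : Icc a b ⊆ Icc 0 T := Icc_subset_Icc ha hb
  have hsub : uIoc s t ⊆ Ioc a b := Ioc_subset_Ioc (le_min hs.1 ht.1) (max_le hs.2 ht.2)
  rw [sub_eq_intervalIntegral_of_eq_add_integral hv hu (hab hs) (hab ht)]
  exact intervalIntegral.norm_integral_le_integral_norm_uIoc.trans
    (setIntegral_mono_set (IntegrableOn.mono_set hv.norm (Ioc_subset_Ioc ha hb))
      (Eventually.of_forall fun _ => norm_nonneg _) hsub.eventuallyLE)

end IncrementBound

theorem stmt4_general
    {A₁ : Type*} [NormedAddCommGroup A₁] [NormedSpace ℝ A₁]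
    (T : ℝ) (hT : 0 < T) (p : ℝ) (hp : 1 ≤ p)
    (u v : ℝ → A₁)
    (hv : IntegrableOn v (Set.Ioc (0 : ℝ) T))
    (hu : ∀ t ∈ Set.Icc (0 : ℝ) T, u t = u 0 + ∫ s in (0 : ℝ)..t, v s)
    (N : ℕ) (hN : 0 < N)
    (t' : ℕ → ℝ)
    (ht' : ∀ k, 1 ≤ k → k ≤ N →
      t' k ∈ Set.Ioo (((k : ℝ) - 1) * (T / N)) ((k : ℝ) * (T / N))) :
    (∑ k ∈ Finset.Icc 1 N,
        ∫⁻ t in Set.Ioc (((k : ℝ) - 1) * (T / N)) ((k : ℝ) * (T / N)),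
          ENNReal.ofReal (‖u t - u (t' k)‖ ^ p)) ^ (1 / p)
      ≤ ENNReal.ofReal ((T / N) ^ (1 / p) * ∫ t in Set.Ioc (0 : ℝ) T, ‖v t‖) := by
  have hp0 : 0 < p := by linarith
  set h := T / N with h_def
  have hh : 0 < h := by positivity
  have hNh : (N : ℝ) * h = T := by rw [h_def]; field_simp
  set a : ℕ → ℝ := fun k => ∫ t in Ioc (((k : ℝ) - 1) * h) (k * h), ‖v t‖
  have cell : ∀ k ∈ Finset.Icc 1 N,
      ∫⁻ t in Ioc (((k : ℝ) - 1) * h) (k * h), ENNReal.ofReal (‖u t - u (t' k)‖ ^ p)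
        ≤ ENNReal.ofReal h * ENNReal.ofReal (a k) ^ p := by
    intro k hk
    obtain ⟨hk1, hkN⟩ := Finset.mem_Icc.mp hk
    have hk1' : (1 : ℝ) ≤ k := by exact_mod_cast hk1
    have hkN' : (k : ℝ) ≤ N := by exact_mod_cast hkN
    have hleft : 0 ≤ ((k : ℝ) - 1) * h := by nlinarith
    have hright : (k : ℝ) * h ≤ T := by nlinarith
    have ht'k := ht' k hk1 hkN
    have bound := setLIntegral_ofReal_norm_rpow_le (μ := volume) hp0.le fun t ht =>
      norm_sub_le_setIntegral_norm_of_eq_add_integral hv hu hleft hright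
        (Ioo_subset_Icc_self ht'k) (Ioc_subset_Icc_self ht)
    rwa [Real.volume_Ioc, show (k : ℝ) * h - (k - 1) * h = h by ring] at bound
  have hsum : ∑ k ∈ Finset.Icc 1 N, a k = ∫ t in Ioc 0 T, ‖v t‖ := by
    rw [← hNh] at hv ⊢
    exact sum_setIntegral_Ioc_uniform_partition hh.le N hv.norm
  calc _ ≤ (∑ k ∈ Finset.Icc 1 N, ENNReal.ofReal h * ENNReal.ofReal (a k) ^ p) ^ (1 / p) :=
        ENNReal.rpow_le_rpow (Finset.sum_le_sum cell) (by positivity)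
    _ ≤ ENNReal.ofReal h ^ (1 / p) * ∑ k ∈ Finset.Icc 1 N, ENNReal.ofReal (a k) :=
        ENNReal.rpow_sum_const_mul_rpow_le _ _ _ hp
    _ = _ := by
      rw [← ENNReal.ofReal_sum_of_nonneg fun k _ =>
          setIntegral_nonneg measurableSet_Ioc fun _ _ => norm_nonneg _,
        hsum, ENNReal.ofReal_rpow_of_nonneg hh.le (by positivity),
        ← ENNReal.ofReal_mul (by positivity)]

/-- The piecewise-constant interpolation estimate used in part (b) of Lemma 2:
if u(t) = u(0) + ∫₀ᵗ v(s) ds on [0,T], then for any uniform partition of [0,T] into N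
subintervals and any sample points t'_k in the open subintervals,
(Σ_k ∫_{t_{k-1}}^{t_k} ‖u(t) − u(t'_k)‖^p dt)^{1/p} ≤ h^{1/p} ∫₀^T ‖v(t)‖ dt, with h = T/N. -/
theorem stmt4
    {A₁ : Type*} [NormedAddCommGroup A₁] [NormedSpace ℝ A₁] [CompleteSpace A₁]
    (T : ℝ) (hT : 0 < T) (p : ℝ) (hp : 1 ≤ p)
    (u v : ℝ → A₁)
    (hv : IntegrableOn v (Set.Ioc (0 : ℝ) T))
    (hu : ∀ t ∈ Set.Icc (0 : ℝ) T, u t = u 0 + ∫ s in (0 : ℝ)..t, v s)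
    (N : ℕ) (hN : 0 < N)
    (t' : ℕ → ℝ)
    (ht' : ∀ k, 1 ≤ k → k ≤ N →
      t' k ∈ Set.Ioo (((k : ℝ) - 1) * (T / N)) ((k : ℝ) * (T / N))) :
    (∑ k ∈ Finset.Icc 1 N,
        ∫⁻ t in Set.Ioc (((k : ℝ) - 1) * (T / N)) ((k : ℝ) * (T / N)),
          ENNReal.ofReal (‖u t - u (t' k)‖ ^ p)) ^ (1 / p)
      ≤ ENNReal.ofReal ((T / N) ^ (1 / p) * ∫ t in Set.Ioc (0 : ℝ) T, ‖v t‖) :=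
  stmt4_general T hT p hp u v hv hu N hN t' ht'
end

section
/- Let T > 0, let A₁ be a real Banach space, let M₊ be a seminormed nonnegative cone in A₁ that is compactly embedded in A₁, and let 1 ≤ p ≤ ∞ and 1 < p₁ ≤ ∞. Then Y₊ is compactly embedded in C([0,T]; A₁): every sequence (u_n) in Y₊ with sup_n [u_n]_{Y₊} < ∞ has a subsequence whose continuous representatives converge uniformly on [0,T] in the norm of A₁. -/
/-!
The continuous representatives `g n t = u n 0 + ∫₀ᵗ w n` are uniformly Hölder with exponent
`1 - 1/p₁ > 0` by Hölder's inequality, hence uniformly equicontinuous. On every subinterval of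
length `δ` the `Lᵖ` bound on `ν ∘ u n` forces `ν (u n s) ≤ C(δ)` at some point `s` where
`u n s = g n s`, so every value `g n t` is close to the sublevel set `{ν ≤ C(δ)}` of the cone,
which is totally bounded by compactness of the embedding. Hence all values lie in one compact set
and Arzelà–Ascoli yields a uniformly convergent subsequence.
-/

open Filter Topology MeasureTheory Set
open scoped ENNReal NNReal UniformConvergence

theorem ENNReal.one_div_toReal_le_one {q : ℝ≥0∞} (hq : 1 ≤ q) : 1 / q.toReal ≤ 1 := by
  rw [one_div, ← ENNReal.toReal_inv]
  exact ENNReal.toReal_le_of_le_ofReal zero_le_one (by simpa using ENNReal.inv_le_one.2 hq)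

theorem ENNReal.one_div_toReal_lt_one {q : ℝ≥0∞} (hq : 1 < q) : 1 / q.toReal < 1 := by
  rw [one_div, ← ENNReal.toReal_inv]
  simpa using ENNReal.toReal_strict_mono ENNReal.one_ne_top (ENNReal.inv_lt_one.2 hq)

theorem totallyBounded_of_forall_exists_subseq_tendsto {X : Type*} [PseudoMetricSpace X]
    {s : Set X} (hs : ∀ a : ℕ → X, (∀ n, a n ∈ s) →
      ∃ (ψ : ℕ → ℕ) (l : X), StrictMono ψ ∧ Tendsto (fun n => a (ψ n)) atTop (𝓝 l)) :
    TotallyBounded s := by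
  refine (IsSeqCompact.totallyBounded fun x hx => ?_).subset subset_closure
  have hy : ∀ n : ℕ, ∃ y ∈ s, dist (x n) y < 1 / (n + 1) := fun n =>
    Metric.mem_closure_iff.1 (hx n) _ Nat.one_div_pos_of_nat
  choose y hys hxy using hy
  obtain ⟨ψ, l, hψ, hl⟩ := hs y hys
  refine ⟨l, mem_closure_of_tendsto hl (Eventually.of_forall fun n => hys (ψ n)), ψ, hψ,
    hl.congr_dist (squeeze_zero (fun _ => dist_nonneg) (fun n => ?_)
      (tendsto_one_div_add_atTop_nhds_zero_nat.comp hψ.tendsto_atTop))⟩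
  rw [dist_comm]
  exact (hxy (ψ n)).le

theorem totallyBounded_of_forall_exists_totallyBounded_near {X : Type*} [PseudoMetricSpace X]
    {s : Set X} (hs : ∀ ε > 0, ∃ t, TotallyBounded t ∧ ∀ x ∈ s, ∃ y ∈ t, dist x y < ε) :
    TotallyBounded s := by
  rw [Metric.totallyBounded_iff]
  intro ε hε
  obtain ⟨t, ht, hst⟩ := hs (ε / 2) (half_pos hε)
  obtain ⟨F, hF, htF⟩ := Metric.totallyBounded_iff.1 ht (ε / 2) (half_pos hε)
  refine ⟨F, hF, fun x hx => ?_⟩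
  obtain ⟨y, hyt, hxy⟩ := hst x hx
  obtain ⟨z, hzF, hyz⟩ := mem_iUnion₂.1 (htF hyt)
  exact mem_iUnion₂.2 ⟨z, hzF, (dist_triangle x y z).trans_lt
    (by linarith [Metric.mem_ball.1 hyz])⟩

theorem frequently_enorm_lt_of_eLpNorm_lt {α ε : Type*} [MeasurableSpace α] {μ : Measure α}
    [NeZero μ] [ENorm ε] {f : α → ε} {p : ℝ≥0∞} (hp : p ≠ 0) {c : ℝ≥0∞}
    (hc : eLpNorm f p μ < c * μ univ ^ (1 / p.toReal)) : ∃ᵐ x ∂μ, ‖f x‖ₑ < c := by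
  by_contra h
  refine hc.not_ge ?_
  rw [← enorm_eq_self c, ← eLpNorm_const c hp (NeZero.ne μ)]
  exact eLpNorm_mono_enorm_ae ((not_frequently.1 h).mono fun x hx => by simpa using hx)

theorem exists_mem_Icc_dist_le_and_enorm_lt {F : Type*} [TopologicalSpace F] [ContinuousENorm F]
    {f : ℝ → F} {P : ℝ → Prop} {a b δ : ℝ} (hδ : 0 < δ) (hδab : δ ≤ b - a) {p : ℝ≥0∞}
    (hp : p ≠ 0) {c : ℝ≥0∞}
    (hc : eLpNorm f p (volume.restrict (Ioc a b)) < c * ENNReal.ofReal δ ^ (1 / p.toReal))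
    (hP : ∀ᵐ s ∂volume.restrict (Icc a b), P s) {t : ℝ} (ht : t ∈ Icc a b) :
    ∃ s ∈ Icc a b, dist s t ≤ δ ∧ P s ∧ ‖f s‖ₑ < c := by
  obtain ⟨a', ha', ha'b, hta', hta'δ⟩ : ∃ a', a ≤ a' ∧ a' + δ ≤ b ∧ a' ≤ t ∧ t ≤ a' + δ :=
    ⟨min t (b - δ), le_min ht.1 (by linarith), by linarith [min_le_right t (b - δ)],
      min_le_left _ _, sub_le_iff_le_add.1 (le_min (by linarith) (by linarith [ht.2]))⟩
  have hI : Ioc a' (a' + δ) ⊆ Ioc a b := Ioc_subset_Ioc ha' ha'b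
  have hvol : volume.restrict (Ioc a' (a' + δ)) univ = ENNReal.ofReal δ := by
    rw [Measure.restrict_apply_univ, Real.volume_Ioc, add_sub_cancel_left]
  have : NeZero (volume.restrict (Ioc a' (a' + δ))) :=
    ⟨fun h => by simp [h] at hvol; linarith⟩
  have hfreq : ∃ᵐ s ∂volume.restrict (Ioc a' (a' + δ)), ‖f s‖ₑ < c := by
    refine frequently_enorm_lt_of_eLpNorm_lt hp ?_
    rw [hvol]
    exact (eLpNorm_mono_measure _ (Measure.restrict_mono hI le_rfl)).trans_lt hc
  have hgood : ∀ᵐ s ∂volume.restrict (Ioc a' (a' + δ)), s ∈ Ioc a' (a' + δ) ∧ P s :=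
    (ae_restrict_mem measurableSet_Ioc).and
      (ae_restrict_of_ae_restrict_of_subset (hI.trans Ioc_subset_Icc_self) hP)
  obtain ⟨s, hfs, hsI, hPs⟩ := (hfreq.and_eventually hgood).exists
  refine ⟨s, Ioc_subset_Icc_self (hI hsI), ?_, hPs, hfs⟩
  rw [Real.dist_eq, abs_le]
  constructor <;> linarith [hsI.1, hsI.2]

theorem uniformEquicontinuousOn_of_holderOnWith {ι X Y : Type*} [PseudoEMetricSpace X]
    [PseudoEMetricSpace Y] {C r : ℝ≥0} {F : ι → X → Y} {s : Set X}
    (hF : ∀ i, HolderOnWith C r (F i) s) (hr : 0 < r) : UniformEquicontinuousOn F s := by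
  rw [uniformEquicontinuousOn_iff_uniformContinuousOn]
  refine HolderOnWith.uniformContinuousOn (C := C) (fun x hx y hy => ?_) hr
  rw [UniformFun.edist_def]
  exact iSup_le fun i => hF i x hx y hy

theorem holderOnWith_const_add_integral {E : Type*} [NormedAddCommGroup E] [NormedSpace ℝ E]
    {w : ℝ → E} {a b : ℝ} {q : ℝ≥0∞} (hq : 1 ≤ q) {M : ℝ≥0} (hw : IntegrableOn w (Ioc a b))
    (hM : eLpNorm w q (volume.restrict (Ioc a b)) ≤ M) (c : E) :
    HolderOnWith M (1 - 1 / q.toReal).toNNReal (fun t => c + ∫ s in a..t, w s) (Icc a b) := by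
  have hexp : 1 / (1 : ℝ≥0∞).toReal - 1 / q.toReal = (1 - 1 / q.toReal).toNNReal := by
    rw [ENNReal.toReal_one, div_one,
      Real.coe_toNNReal _ (sub_nonneg.2 (ENNReal.one_div_toReal_le_one hq))]
  have hle : ∀ x ∈ Icc a b, ∀ y ∈ Icc a b, x ≤ y →
      edist (c + ∫ s in a..x, w s) (c + ∫ s in a..y, w s)
        ≤ M * edist x y ^ ((1 - 1 / q.toReal).toNNReal : ℝ) := by
    intro x hx y hy hxy
    have hsub : Ioc x y ⊆ Ioc a b := Ioc_subset_Ioc hx.1 hy.2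
    have hii : ∀ z ∈ Icc a b, IntervalIntegrable w volume a z := fun z hz =>
      (intervalIntegrable_iff_integrableOn_Ioc_of_le hz.1).2
        (hw.mono_set (Ioc_subset_Ioc_right hz.2))
    have hdiff : (∫ s in a..y, w s) - ∫ s in a..x, w s = ∫ s in Ioc x y, w s := by
      rw [intervalIntegral.integral_interval_sub_left (hii y hy) (hii x hx),
        intervalIntegral.integral_of_le hxy]
    calc edist (c + ∫ s in a..x, w s) (c + ∫ s in a..y, w s)
        = ‖∫ s in Ioc x y, w s‖ₑ := by
          rw [edist_add_left, edist_comm, edist_eq_enorm_sub, hdiff]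
      _ ≤ ∫⁻ s in Ioc x y, ‖w s‖ₑ := enorm_integral_le_lintegral_enorm _
      _ = eLpNorm w 1 (volume.restrict (Ioc x y)) := eLpNorm_one_eq_lintegral_enorm.symm
      _ ≤ eLpNorm w q (volume.restrict (Ioc x y))
            * volume.restrict (Ioc x y) univ ^ (1 / (1 : ℝ≥0∞).toReal - 1 / q.toReal) :=
          eLpNorm_le_eLpNorm_mul_rpow_measure_univ hq (hw.mono_set hsub).aestronglyMeasurable
      _ ≤ M * edist x y ^ ((1 - 1 / q.toReal).toNNReal : ℝ) := by
          rw [hexp, Measure.restrict_apply_univ, Real.volume_Ioc, edist_comm, edist_dist,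
            Real.dist_eq, abs_of_nonneg (sub_nonneg.2 hxy)]
          gcongr
          exact (eLpNorm_mono_measure _ (Measure.restrict_mono hsub le_rfl)).trans hM
  intro x hx y hy
  rcases le_total x y with hxy | hyx
  · exact hle x hx y hy hxy
  · rw [edist_comm, edist_comm x]
    exact hle y hy x hx hyx

theorem exists_subseq_tendstoUniformlyOn_of_equicontinuousOn {X α : Type*} [TopologicalSpace X]
    [EMetricSpace α] {K : Set X} (hK : IsCompact K) {F : ℕ → X → α} (hF : EquicontinuousOn F K)
    (hQ : ∀ x ∈ K, ∃ Q, IsCompact Q ∧ ∀ n, F n x ∈ Q) :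
    ∃ ψ : ℕ → ℕ, StrictMono ψ ∧ ∃ L : X → α, TendstoUniformlyOn (F ∘ ψ) L atTop K := by
  have hcpt : IsCompact (closure (range (UniformOnFun.ofFun {K} ∘ F))) := by
    refine ArzelaAscoli.isCompact_closure_of_isClosedEmbedding (F := UniformOnFun.toFun {K})
      (by simpa using hK) IsClosedEmbedding.id ?_ ?_
    · rintro K' rfl x hx U hU
      filter_upwards [hF x hx U hU] with y hy
      rintro ⟨_, n, rfl⟩
      exact hy n
    · rintro K' rfl x hx
      obtain ⟨Q, hQc, hQ⟩ := hQ x hx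
      exact ⟨Q, hQc, by rintro _ ⟨n, rfl⟩; exact hQ n⟩
  obtain ⟨L, -, ψ, hψ, hL⟩ := hcpt.tendsto_subseq fun n => subset_closure (mem_range_self n)
  exact ⟨ψ, hψ, UniformOnFun.toFun {K} L,
    UniformOnFun.tendsto_iff_tendstoUniformlyOn.1 hL K rfl⟩

theorem totallyBounded_iUnion_image_of_ae_eq {E : Type*} [PseudoMetricSpace E]
    {S : Set E} {ν : E → ℝ} (hS : ∀ C : ℝ, TotallyBounded {x ∈ S | ν x ≤ C})
    {a b : ℝ} (hab : a < b) {p : ℝ≥0∞} (hp : p ≠ 0) {M : ℝ≥0} {u g : ℕ → ℝ → E}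
    (huS : ∀ n, ∀ t ∈ Icc a b, u n t ∈ S)
    (hν : ∀ n, eLpNorm (fun t => ν (u n t)) p (volume.restrict (Ioc a b)) ≤ M)
    (hug : ∀ n, ∀ᵐ t ∂volume.restrict (Icc a b), u n t = g n t)
    (hg : UniformEquicontinuousOn g (Icc a b)) :
    TotallyBounded (⋃ n, g n '' Icc a b) := by
  refine totallyBounded_of_forall_exists_totallyBounded_near fun ε hε => ?_
  obtain ⟨δ, hδ, hgδ⟩ :=
    ((Metric.uniformity_basis_dist.inf_principal _).uniformEquicontinuousOn_iff
      Metric.uniformity_basis_dist).1 hg ε hε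
  set δ' := min (δ / 2) (b - a)
  have hδ' : 0 < δ' := lt_min (half_pos hδ) (sub_pos.2 hab)
  obtain ⟨N, hN⟩ := ENNReal.exists_nat_mul_gt
    (ENNReal.rpow_pos (ENNReal.ofReal_pos.2 hδ') ENNReal.ofReal_ne_top).ne' ENNReal.coe_ne_top
  refine ⟨{x ∈ S | ν x ≤ N}, hS N, ?_⟩
  rintro _ ⟨_, ⟨n, rfl⟩, t, ht, rfl⟩
  obtain ⟨s, hs, hst, hus, hνs⟩ := exists_mem_Icc_dist_le_and_enorm_lt hδ' (min_le_right _ _) hp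
    ((hν n).trans_lt hN) (hug n) ht
  refine ⟨u n s, ⟨huS n s hs, ?_⟩, ?_⟩
  · rw [Real.enorm_eq_ofReal_abs, ← ENNReal.ofReal_natCast,
      ENNReal.ofReal_lt_ofReal_iff'] at hνs
    exact (le_abs_self _).trans hνs.1.le
  · have hts : dist t s < δ := by
      rw [dist_comm]
      exact hst.trans_lt ((min_le_left _ _).trans_lt (half_lt_self hδ))
    rw [hus]
    exact hgδ t s ⟨hts, ht, hs⟩ n

theorem stmt6_general
    {A₁ : Type*} [NormedAddCommGroup A₁] [NormedSpace ℝ A₁] [CompleteSpace A₁]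
    (T : ℝ) (hT : 0 < T)
    -- M₊ = S is a seminormed nonnegative cone in A₁ with seminorm ν
    (S : Set A₁) (ν : A₁ → ℝ)
    -- the embedding of M₊ in A₁ is compact
    (hcpt : ∀ a : ℕ → A₁, (∀ n, a n ∈ S) → (∃ K : ℝ, ∀ n, ν (a n) ≤ K) →
      ∃ (ψ : ℕ → ℕ) (l : A₁), StrictMono ψ ∧
        Tendsto (fun n => a (ψ n)) atTop (𝓝 l))
    (p p₁ : ℝ≥0∞) (hp : 1 ≤ p) (hp₁ : 1 < p₁)
    -- (u_n) is a sequence in Y₊, with derivatives (w_n)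
    (u : ℕ → ℝ → A₁) (w : ℕ → ℝ → A₁)
    (huS : ∀ n, ∀ t ∈ Set.Icc (0 : ℝ) T, u n t ∈ S)
    (hwint : ∀ n, IntegrableOn (w n) (Set.Ioc (0 : ℝ) T))
    (hrep : ∀ n, ∀ᵐ t ∂volume.restrict (Set.Icc (0 : ℝ) T),
      u n t = u n 0 + ∫ s in (0 : ℝ)..t, w n s)
    -- the sequence is bounded in Y₊: sup_n [u_n]_{Y₊} < ∞
    (K : ℝ)
    (hbound : ∀ n,
      eLpNorm (fun t => ν (u n t)) p (volume.restrict (Set.Ioc (0 : ℝ) T))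
        + eLpNorm (w n) p₁ (volume.restrict (Set.Ioc (0 : ℝ) T)) ≤ ENNReal.ofReal K) :
    ∃ ψ : ℕ → ℕ, StrictMono ψ ∧
      ∃ g : ℕ → ℝ → A₁,
        (∀ j, ContinuousOn (g j) (Set.Icc (0 : ℝ) T) ∧
          ∀ᵐ t ∂volume.restrict (Set.Icc (0 : ℝ) T), u (ψ j) t = g j t) ∧
        ∃ L : ℝ → A₁, TendstoUniformlyOn g L atTop (Set.Icc (0 : ℝ) T) := by
  set g : ℕ → ℝ → A₁ := fun n t => u n 0 + ∫ s in (0 : ℝ)..t, w n s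
  set r : ℝ≥0 := (1 - 1 / p₁.toReal).toNNReal
  have hr : 0 < r := Real.toNNReal_pos.2 (sub_pos.2 (ENNReal.one_div_toReal_lt_one hp₁))
  have hg : ∀ n, HolderOnWith K.toNNReal r (g n) (Icc 0 T) := fun n =>
    holderOnWith_const_add_integral hp₁.le (hwint n) (le_add_self.trans (hbound n)) _
  have hequi : UniformEquicontinuousOn g (Icc 0 T) :=
    uniformEquicontinuousOn_of_holderOnWith hg hr
  have hsublevel : ∀ C : ℝ, TotallyBounded {x ∈ S | ν x ≤ C} := fun C =>
    totallyBounded_of_forall_exists_subseq_tendsto fun a ha =>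
      hcpt a (fun n => (ha n).1) ⟨C, fun n => (ha n).2⟩
  have hvals : TotallyBounded (⋃ n, g n '' Icc 0 T) :=
    totallyBounded_iUnion_image_of_ae_eq hsublevel hT (zero_lt_one.trans_le hp).ne' huS
      (fun n => le_self_add.trans (hbound n)) hrep hequi
  obtain ⟨ψ, hψ, L, hL⟩ := exists_subseq_tendstoUniformlyOn_of_equicontinuousOn isCompact_Icc
    hequi.equicontinuousOn fun t ht => ⟨_, hvals.closure.isCompact_of_isClosed isClosed_closure,
      fun n => subset_closure (mem_iUnion.2 ⟨n, mem_image_of_mem _ ht⟩)⟩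
  exact ⟨ψ, hψ, g ∘ ψ, fun j => ⟨(hg (ψ j)).continuousOn hr, hrep (ψ j)⟩, L, hL⟩

/-- Lemma 2, part (a): if M₊ is compactly embedded in the Banach space A₁,
1 ≤ p ≤ ∞ and 1 < p₁ ≤ ∞, then Y₊ is compactly embedded in C([0,T];A₁): every
[·]_{Y₊}-bounded sequence in Y₊ has a subsequence whose continuous representatives
converge uniformly on [0,T] in the norm of A₁. -/
theorem stmt6
    {A₁ : Type*} [NormedAddCommGroup A₁] [NormedSpace ℝ A₁] [CompleteSpace A₁]
    (T : ℝ) (hT : 0 < T)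
    -- M₊ = S is a seminormed nonnegative cone in A₁ with seminorm ν
    (S : Set A₁) (ν : A₁ → ℝ)
    (hcone : ∀ φ ∈ S, ∀ c : ℝ, 0 ≤ c → c • φ ∈ S)
    (hν0 : ∀ φ ∈ S, 0 ≤ ν φ)
    (hνeq0 : ∀ φ ∈ S, (ν φ = 0 ↔ φ = 0))
    (hνhom : ∀ φ ∈ S, ∀ c : ℝ, 0 ≤ c → ν (c • φ) = c * ν φ)
    -- M₊ is embedded in A₁
    (hemb : ∃ K₀ > (0 : ℝ), ∀ φ ∈ S, ‖φ‖ ≤ K₀ * ν φ)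
    -- the embedding of M₊ in A₁ is compact
    (hcpt : ∀ a : ℕ → A₁, (∀ n, a n ∈ S) → (∃ K : ℝ, ∀ n, ν (a n) ≤ K) →
      ∃ (ψ : ℕ → ℕ) (l : A₁), StrictMono ψ ∧
        Tendsto (fun n => a (ψ n)) atTop (𝓝 l))
    (p p₁ : ℝ≥0∞) (hp : 1 ≤ p) (hp₁ : 1 < p₁)
    -- (u_n) is a sequence in Y₊, with derivatives (w_n)
    (u : ℕ → ℝ → A₁) (w : ℕ → ℝ → A₁)
    (huS : ∀ n, ∀ t ∈ Set.Icc (0 : ℝ) T, u n t ∈ S)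
    (humeas : ∀ n, AEStronglyMeasurable (u n) (volume.restrict (Set.Ioc (0 : ℝ) T)))
    (hνmeas : ∀ n, AEMeasurable (fun t => ν (u n t)) (volume.restrict (Set.Ioc (0 : ℝ) T)))
    (hwint : ∀ n, IntegrableOn (w n) (Set.Ioc (0 : ℝ) T))
    (hrep : ∀ n, ∀ᵐ t ∂volume.restrict (Set.Icc (0 : ℝ) T),
      u n t = u n 0 + ∫ s in (0 : ℝ)..t, w n s)
    -- the sequence is bounded in Y₊: sup_n [u_n]_{Y₊} < ∞
    (K : ℝ)
    (hbound : ∀ n,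
      eLpNorm (fun t => ν (u n t)) p (volume.restrict (Set.Ioc (0 : ℝ) T))
        + eLpNorm (w n) p₁ (volume.restrict (Set.Ioc (0 : ℝ) T)) ≤ ENNReal.ofReal K) :
    ∃ ψ : ℕ → ℕ, StrictMono ψ ∧
      ∃ g : ℕ → ℝ → A₁,
        (∀ j, ContinuousOn (g j) (Set.Icc (0 : ℝ) T) ∧
          ∀ᵐ t ∂volume.restrict (Set.Icc (0 : ℝ) T), u (ψ j) t = g j t) ∧
        ∃ L : ℝ → A₁, TendstoUniformlyOn g L atTop (Set.Icc (0 : ℝ) T) :=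
  stmt6_general T hT S ν hcpt p p₁ hp hp₁ u w huS hwint hrep K hbound
end

section
/- (Dubinskiĭ's theorem, case (a).) Let T > 0, let A₀ and A₁ be real Banach spaces with A₀ continuously embedded in A₁, and let M₊ be a seminormed nonnegative cone in A₀ that is compactly embedded in A₀. Let 1 ≤ p ≤ ∞ and 1 < p₁ ≤ ∞. Then Y₊ is compactly embedded in L^p(0,T; A₀): every sequence (u_n) in Y₊ with sup_n [u_n]_{Y₊} < ∞ has a subsequence that converges in the norm of L^p(0,T; A₀). -/
/-!
Write `Σ_R = {φ ∈ M₊ | [φ] ≤ R}`; compactness of the embedding makes every `Σ_R` totally bounded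
in `A₀`. In `A₁` the functions `u_n` have the continuous representatives
`v_n(t) = u_n(0) + ∫₀ᵗ u_n'`, which by Hölder's inequality share the modulus of continuity
`K |t - s|^(1 - 1/p₁)`; this is where `p₁ > 1` enters. By Chebyshev's inequality every interval of
length `δ` contains a time `s` with `[u_n(s)] ≤ R(δ)`, so each `v_n(t)` lies close to the totally
bounded set `ι(Σ_R)`, and Arzelà–Ascoli yields a subsequence along which `ι ∘ u_n` is uniformly
Cauchy. Ehrling's inequality `‖φ - χ‖ ≤ ε([φ] + [χ]) + C_ε ‖ι φ - ι χ‖` on `M₊`, which follows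
from compactness of `Σ_1` and injectivity of `ι`, then turns this into a Cauchy sequence in
`L^p(0,T;A₀)`.
-/

open Filter Topology MeasureTheory Set Metric BoundedContinuousFunction
open scoped ENNReal

theorem totallyBounded_of_forall_exists_cauchySeq {X : Type*} [UniformSpace X] {s : Set X}
    (h : ∀ u : ℕ → X, (∀ n, u n ∈ s) → ∃ φ : ℕ → ℕ, StrictMono φ ∧ CauchySeq (u ∘ φ)) :
    TotallyBounded s := by
  intro V hV
  by_contra! hfin
  obtain ⟨u, hus, hsep⟩ : ∃ u : ℕ → X, (∀ n, u n ∈ s) ∧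
      ∀ n m, m < n → u m ∉ UniformSpace.ball (u n) V := by
    simp only [not_subset, mem_iUnion₂, not_exists, exists_prop] at hfin
    simpa only [forall_and, forall_mem_image, not_and] using! seq_of_forall_finite_exists hfin
  obtain ⟨φ, hφ, hcauchy⟩ := h u hus
  obtain ⟨N, hN⟩ := hcauchy.mem_entourage hV
  exact hsep (φ (N + 1)) (φ N) (hφ N.lt_succ_self) (hN (N + 1) N N.le_succ le_rfl)

theorem totallyBounded_of_forall_subset_thickening {X : Type*} [PseudoMetricSpace X] {s : Set X}
    (h : ∀ ε > 0, ∃ Q : Set X, TotallyBounded Q ∧ s ⊆ thickening ε Q) : TotallyBounded s := by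
  refine totallyBounded_iff.2 fun ε hε => ?_
  obtain ⟨Q, hQ, hsQ⟩ := h (ε / 2) (half_pos hε)
  obtain ⟨F, hF, hQF⟩ := totallyBounded_iff.1 hQ (ε / 2) (half_pos hε)
  refine ⟨F, hF, fun x hx => ?_⟩
  obtain ⟨z, hzQ, hxz⟩ := mem_thickening_iff.1 (hsQ hx)
  obtain ⟨y, hyF, hzy⟩ := mem_iUnion₂.1 (hQF hzQ)
  exact mem_iUnion₂.2 ⟨y, hyF, by
    rw [mem_ball] at hzy ⊢
    linarith [dist_triangle x z y]⟩

theorem totallyBounded_iUnion_range_of_forall_exists_mem {E : Type*} [PseudoMetricSpace E]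
    {g : ℕ → ℝ → E} {a b : ℝ} (hab : a < b) {ω : ℝ → ℝ} (hω : Tendsto ω (𝓝 0) (𝓝 0))
    (hmod : ∀ n, ∀ s ∈ Icc a b, ∀ t ∈ Icc a b, dist (g n s) (g n t) ≤ ω (dist s t))
    (hQ : ∀ δ > 0, ∃ Q : Set E, TotallyBounded Q ∧
      ∀ n, ∀ c, a ≤ c → c + δ ≤ b → ∃ s ∈ Ioc c (c + δ), g n s ∈ Q) :
    TotallyBounded (⋃ n, range fun t : Icc a b => g n t) := by
  refine totallyBounded_of_forall_subset_thickening fun ε hε => ?_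
  obtain ⟨δ₀, hδ₀, hω₀⟩ := tendsto_nhds_nhds.1 hω ε hε
  set δ := min (δ₀ / 2) (b - a)
  have hδ : 0 < δ := lt_min (half_pos hδ₀) (sub_pos.2 hab)
  have hδb : δ ≤ b - a := min_le_right _ _
  obtain ⟨Q, hQtb, hgQ⟩ := hQ δ hδ
  refine ⟨Q, hQtb, ?_⟩
  rintro _ ⟨_, ⟨n, rfl⟩, ⟨t, ht⟩, rfl⟩
  set c := min t (b - δ)
  have hac : a ≤ c := le_min ht.1 (by linarith)
  have hcb : c + δ ≤ b := by linarith [min_le_right t (b - δ)]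
  have htc : t - δ ≤ c := le_min (sub_le_self t hδ.le) (sub_le_sub_right ht.2 δ)
  obtain ⟨s, hs, hsQ⟩ := hgQ n c hac hcb
  have hsab : s ∈ Icc a b := ⟨by linarith [hs.1], by linarith [hs.2]⟩
  have hts : dist t s < δ₀ := by
    rw [Real.dist_eq, abs_lt]
    constructor <;> linarith [hs.1, hs.2, min_le_left t (b - δ), min_le_left (δ₀ / 2) (b - a)]
  refine mem_thickening_iff.2 ⟨g n s, hsQ, ?_⟩
  calc dist (g n t) (g n s) ≤ ω (dist t s) := hmod n t ht s hsab
    _ ≤ dist (ω (dist t s)) 0 := by rw [dist_zero_right]; exact le_abs_self _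
    _ < ε := hω₀ (by rwa [dist_zero_right, Real.norm_of_nonneg dist_nonneg])

theorem exists_strictMono_tendstoUniformly_of_equicontinuous {α β : Type*} [TopologicalSpace α]
    [CompactSpace α] [MetricSpace β] [CompleteSpace β] {F : ℕ → α → β} (hF : Equicontinuous F)
    (hrange : TotallyBounded (⋃ n, range (F n))) :
    ∃ φ : ℕ → ℕ, StrictMono φ ∧ ∃ g : α → β, TendstoUniformly (F ∘ φ) g atTop := by
  let G : ℕ → α →ᵇ β := fun n => .mkOfCompact ⟨F n, hF.continuous n⟩
  have hG : IsCompact (closure (range G)) := by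
    refine BoundedContinuousFunction.arzela_ascoli _ (hrange.closure.isCompact_of_isClosed
      isClosed_closure) _ ?_ ?_
    · rintro _ x ⟨n, rfl⟩
      exact subset_closure (mem_iUnion.2 ⟨n, x, rfl⟩)
    · convert hF.comp fun f : range G => f.2.choose with f
      exact congrArg DFunLike.coe f.2.choose_spec.symm
  obtain ⟨g, -, φ, hφ, hlim⟩ := hG.tendsto_subseq fun n => subset_closure (mem_range_self n)
  exact ⟨φ, hφ, g, BoundedContinuousFunction.tendsto_iff_tendstoUniformly.1 hlim⟩

theorem IsCompact.exists_dist_le_add_mul_dist {X Y : Type*} [MetricSpace X] [MetricSpace Y]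
    {K : Set X} (hK : IsCompact K) {ι : X → Y} (hι : Continuous ι) (hinj : Function.Injective ι)
    {ε : ℝ} (hε : 0 < ε) :
    ∃ N, ∀ a ∈ K, ∀ b ∈ K, dist a b ≤ ε + N * dist (ι a) (ι b) := by
  -- on the compact set of pairs at distance `≥ ε`, the ratio `dist a b / dist (ι a) (ι b)` is
  -- continuous, hence bounded
  let L := K ×ˢ K ∩ {x | ε ≤ dist x.1 x.2}
  have hL : IsCompact L := (hK.prod hK).inter_right (isClosed_le continuous_const continuous_dist)
  have hden : ∀ x ∈ L, dist (ι x.1) (ι x.2) ≠ 0 := fun x hx =>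
    dist_ne_zero.2 (hinj.ne (dist_pos.1 (hε.trans_le hx.2)))
  obtain ⟨N, hN⟩ := hL.exists_bound_of_continuousOn
    (f := fun x => dist x.1 x.2 / dist (ι x.1) (ι x.2))
    ((by fun_prop : Continuous _).continuousOn.div (by fun_prop : Continuous _).continuousOn hden)
  refine ⟨max N 0, fun a ha b hb => ?_⟩
  have hN0 : 0 ≤ max N 0 * dist (ι a) (ι b) := by positivity
  rcases lt_or_ge (dist a b) ε with hab | hab
  · linarith
  have hratio := (le_abs_self _).trans (hN (a, b) ⟨⟨ha, hb⟩, hab⟩)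
  calc dist a b = dist a b / dist (ι a) (ι b) * dist (ι a) (ι b) :=
        (div_mul_cancel₀ _ (hden (a, b) ⟨⟨ha, hb⟩, hab⟩)).symm
    _ ≤ max N 0 * dist (ι a) (ι b) :=
        mul_le_mul_of_nonneg_right (hratio.trans (le_max_left _ _)) dist_nonneg
    _ ≤ ε + max N 0 * dist (ι a) (ι b) := by linarith

theorem ENNReal.toReal_inv_le_one {q : ℝ≥0∞} (hq : 1 ≤ q) : q.toReal⁻¹ ≤ 1 := by
  rw [← ENNReal.toReal_inv]
  exact ENNReal.toReal_le_of_le_ofReal zero_le_one (by simpa using ENNReal.inv_le_one.2 hq)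

theorem ENNReal.toReal_inv_lt_one {q : ℝ≥0∞} (hq : 1 < q) : q.toReal⁻¹ < 1 := by
  rw [← ENNReal.toReal_inv]
  exact ENNReal.toReal_lt_of_lt_ofReal (by simpa using ENNReal.inv_lt_one.2 hq)

section Primitive

variable {E : Type*} [NormedAddCommGroup E] [NormedSpace ℝ E]

theorem enorm_intervalIntegral_le_eLpNorm_mul_rpow {w : ℝ → E} {q : ℝ≥0∞} (hq : 1 ≤ q)
    {s t : ℝ} (hst : s ≤ t) (hw : AEStronglyMeasurable w (volume.restrict (Ioc s t))) :
    ‖∫ x in s..t, w x‖ₑ ≤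
      eLpNorm w q (volume.restrict (Ioc s t)) * ENNReal.ofReal (t - s) ^ (1 - q.toReal⁻¹) := by
  rw [intervalIntegral.integral_of_le hst]
  calc ‖∫ x in Ioc s t, w x‖ₑ ≤ eLpNorm w 1 (volume.restrict (Ioc s t)) := by
        rw [eLpNorm_one_eq_lintegral_enorm]; exact enorm_integral_le_lintegral_enorm w
    _ ≤ _ := by
        simpa [Real.volume_Ioc] using eLpNorm_le_eLpNorm_mul_rpow_measure_univ hq hw

theorem norm_intervalIntegral_sub_le_s8 {w : ℝ → E} {q : ℝ≥0∞} (hq : 1 ≤ q) {a b M : ℝ}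
    (hM : 0 ≤ M) (hw : IntegrableOn w (Ioc a b))
    (hwM : eLpNorm w q (volume.restrict (Ioc a b)) ≤ ENNReal.ofReal M)
    {s t : ℝ} (hs : s ∈ Icc a b) (ht : t ∈ Icc a b) :
    ‖(∫ x in a..t, w x) - ∫ x in a..s, w x‖ ≤ M * |t - s| ^ (1 - q.toReal⁻¹) := by
  wlog hst : s ≤ t generalizing s t
  · rw [norm_sub_rev, abs_sub_comm]
    exact this ht hs (le_of_not_ge hst)
  have hint : ∀ x ∈ Icc a b, IntervalIntegrable w volume a x := fun x hx =>
    (intervalIntegrable_iff_integrableOn_Ioc_of_le hx.1).2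
      (hw.mono_set (Ioc_subset_Ioc_right hx.2))
  have hsub : Ioc s t ⊆ Ioc a b := Ioc_subset_Ioc hs.1 ht.2
  have hθ : 0 ≤ 1 - q.toReal⁻¹ := sub_nonneg.2 (ENNReal.toReal_inv_le_one hq)
  have h := (enorm_intervalIntegral_le_eLpNorm_mul_rpow hq hst
    (hw.mono_set hsub).aestronglyMeasurable).trans (mul_le_mul_left
      ((eLpNorm_mono_measure _ (Measure.restrict_mono hsub le_rfl)).trans hwM) _)
  rw [ENNReal.ofReal_rpow_of_nonneg (sub_nonneg.2 hst) hθ, ← ENNReal.ofReal_mul hM, ← ofReal_norm,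
    ENNReal.ofReal_le_ofReal_iff (by positivity)] at h
  rwa [intervalIntegral.integral_interval_sub_left (hint t ht) (hint s hs),
    abs_of_nonneg (sub_nonneg.2 hst)]

end Primitive

theorem exists_mem_lt_and_of_lintegral_lt {α : Type*} [MeasurableSpace α] {μ : Measure α}
    {f : α → ℝ} (hf : AEMeasurable f μ) {P : α → Prop} (hP : ∀ᵐ x ∂μ, P x) {I : Set α} {R : ℝ}
    (hlt : ∫⁻ x, ENNReal.ofReal (f x) ∂μ < ENNReal.ofReal R * μ I) :
    ∃ x ∈ I, f x < R ∧ P x := by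
  by_contra! hI
  have hcover : I ⊆ {x | ENNReal.ofReal R ≤ ENNReal.ofReal (f x)} ∪ {x | ¬P x} := fun x hx => by
    by_cases hR : R ≤ f x
    · exact Or.inl (ENNReal.ofReal_le_ofReal hR)
    · exact Or.inr (hI x hx (lt_of_not_ge hR))
  have hμI : μ I ≤ μ {x | ENNReal.ofReal R ≤ ENNReal.ofReal (f x)} := by
    refine (measure_mono hcover).trans ((measure_union_le _ _).trans_eq ?_)
    rw [ae_iff.1 hP, add_zero]
  exact hlt.not_ge ((mul_le_mul' le_rfl hμI).trans
    (mul_meas_ge_le_lintegral₀ hf.ennreal_ofReal _))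

theorem lintegral_ofReal_le_eLpNorm_mul_rpow {α : Type*} [MeasurableSpace α] {μ : Measure α}
    {f : α → ℝ} (hf : AEStronglyMeasurable f μ) {p : ℝ≥0∞} (hp : 1 ≤ p) :
    ∫⁻ x, ENNReal.ofReal (f x) ∂μ ≤ eLpNorm f p μ * μ univ ^ (1 - p.toReal⁻¹) := by
  calc ∫⁻ x, ENNReal.ofReal (f x) ∂μ ≤ eLpNorm f 1 μ := by
        rw [eLpNorm_one_eq_lintegral_enorm]
        exact lintegral_mono fun x => Real.ofReal_le_enorm (f x)
    _ ≤ _ := by simpa using eLpNorm_le_eLpNorm_mul_rpow_measure_univ hp hf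

theorem exists_forall_exists_mem_Ioc_lt_and {f : ℕ → ℝ → ℝ} {P : ℕ → ℝ → Prop} {a b : ℝ}
    {p : ℝ≥0∞} (hp : 1 ≤ p) (hf : ∀ n, AEMeasurable (f n) (volume.restrict (Ioc a b))) {M : ℝ}
    (hfM : ∀ n, eLpNorm (f n) p (volume.restrict (Ioc a b)) ≤ ENNReal.ofReal M)
    (hP : ∀ n, ∀ᵐ t ∂volume.restrict (Ioc a b), P n t) {δ : ℝ} (hδ : 0 < δ) :
    ∃ R, ∀ n, ∀ c, a ≤ c → c + δ ≤ b → ∃ s ∈ Ioc c (c + δ), f n s < R ∧ P n s := by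
  set B := ENNReal.ofReal M * volume (Ioc a b) ^ (1 - p.toReal⁻¹)
  have hB : B ≠ ∞ := ENNReal.mul_ne_top ENNReal.ofReal_ne_top (ENNReal.rpow_ne_top_of_nonneg
    (sub_nonneg.2 (ENNReal.toReal_inv_le_one hp)) measure_Ioc_lt_top.ne)
  have hfB : ∀ n, ∫⁻ t in Ioc a b, ENNReal.ofReal (f n t) ≤ B := fun n =>
    (lintegral_ofReal_le_eLpNorm_mul_rpow (hf n).aestronglyMeasurable hp).trans <| by
      rw [Measure.restrict_apply_univ]
      exact mul_le_mul_left (hfM n) _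
  refine ⟨(B.toReal + 1) / δ, fun n c hac hcb => exists_mem_lt_and_of_lintegral_lt (hf n) (hP n) ?_⟩
  rw [Measure.restrict_apply measurableSet_Ioc, inter_eq_self_of_subset_left
    (Ioc_subset_Ioc hac hcb), Real.volume_Ioc, add_sub_cancel_left,
    ← ENNReal.ofReal_mul (by positivity), div_mul_cancel₀ _ hδ.ne']
  calc ∫⁻ t in Ioc a b, ENNReal.ofReal (f n t) ≤ ENNReal.ofReal B.toReal := by
        rw [ENNReal.ofReal_toReal hB]; exact hfB n
    _ < ENNReal.ofReal (B.toReal + 1) :=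
        (ENNReal.ofReal_lt_ofReal_iff (by positivity)).2 (lt_add_one _)

section Lp

variable {α E : Type*} [MeasurableSpace α] {μ : Measure α} [NormedAddCommGroup E] {p : ℝ≥0∞}

theorem exists_tendsto_eLpNorm_sub_of_cauchy [CompleteSpace E] (hp : 1 ≤ p) {f : ℕ → α → E}
    (hf : ∀ n, MemLp (f n) p μ)
    (hcauchy : ∀ ε > 0, ∃ N, ∀ m ≥ N, ∀ n ≥ N, eLpNorm (f m - f n) p μ ≤ ENNReal.ofReal ε) :
    ∃ g : α → E, Tendsto (fun n => eLpNorm (f n - g) p μ) atTop (𝓝 0) := by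
  have : Fact (1 ≤ p) := ⟨hp⟩
  let F : ℕ → Lp E p μ := fun n => (hf n).toLp
  have hF : CauchySeq F := by
    refine Metric.cauchySeq_iff'.2 fun ε hε => ?_
    obtain ⟨N, hN⟩ := hcauchy (ε / 2) (half_pos hε)
    refine ⟨N, fun n hn => ?_⟩
    rw [dist_eq_norm, ← MemLp.toLp_sub, Lp.norm_toLp]
    exact (ENNReal.toReal_le_of_le_ofReal (half_pos hε).le (hN n hn N le_rfl)).trans_lt
      (half_lt_self hε)
  obtain ⟨G, hG⟩ := cauchySeq_tendsto_of_complete hF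
  refine ⟨G, ((Lp.tendsto_Lp_iff_tendsto_eLpNorm' F G).1 hG).congr fun n => ?_⟩
  exact eLpNorm_congr_ae ((hf n).coeFn_toLp.sub EventuallyEq.rfl)

theorem cauchy_eLpNorm_of_ae_norm_sub_le [IsFiniteMeasure μ] (p : ℝ≥0∞) {f : ℕ → α → E}
    (hf : ∀ η > 0, ∃ N, ∀ m ≥ N, ∀ n ≥ N, ∀ᵐ x ∂μ, ‖f m x - f n x‖ ≤ η) :
    ∀ η > 0, ∃ N, ∀ m ≥ N, ∀ n ≥ N, eLpNorm (f m - f n) p μ ≤ ENNReal.ofReal η := by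
  intro η hη
  set L := (μ univ ^ p.toReal⁻¹).toReal
  have hL : ENNReal.ofReal L = μ univ ^ p.toReal⁻¹ :=
    ENNReal.ofReal_toReal (ENNReal.rpow_ne_top_of_nonneg (by positivity) (measure_ne_top μ univ))
  obtain ⟨N, hN⟩ := hf (η / (L + 1)) (by positivity)
  refine ⟨N, fun m hm n hn => (eLpNorm_le_of_ae_bound (hN m hm n hn)).trans ?_⟩
  rw [← hL, ← ENNReal.ofReal_mul ENNReal.toReal_nonneg]
  refine ENNReal.ofReal_le_ofReal ?_
  rw [mul_div_assoc', div_le_iff₀ (by positivity)]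
  nlinarith [ENNReal.toReal_nonneg (a := μ univ ^ p.toReal⁻¹)]

theorem cauchy_eLpNorm_of_ae_norm_sub_le_add_mul {F : Type*} [NormedAddCommGroup F] (hp : 1 ≤ p)
    {f : ℕ → α → E} {g : ℕ → α → ℝ} {h : ℕ → α → F} {M : ℝ} (hM : 0 ≤ M)
    (hg : ∀ n, AEStronglyMeasurable (g n) μ) (hgM : ∀ n, eLpNorm (g n) p μ ≤ ENNReal.ofReal M)
    (hh : ∀ n, AEStronglyMeasurable (h n) μ)
    (hfgh : ∀ ε > 0, ∃ C, ∀ m n, ∀ᵐ x ∂μ,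
      ‖f m x - f n x‖ ≤ ε * (g m x + g n x) + C * ‖h m x - h n x‖)
    (hcauchy : ∀ η > 0, ∃ N, ∀ m ≥ N, ∀ n ≥ N, eLpNorm (h m - h n) p μ ≤ ENNReal.ofReal η) :
    ∀ ε > 0, ∃ N, ∀ m ≥ N, ∀ n ≥ N, eLpNorm (f m - f n) p μ ≤ ENNReal.ofReal ε := by
  intro ε hε
  set ε' := ε / (4 * (M + 1))
  have hε' : 0 < ε' := by positivity
  obtain ⟨C, hC⟩ := hfgh ε' hε'
  obtain ⟨N, hN⟩ := hcauchy (ε / (2 * (|C| + 1))) (by positivity)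
  refine ⟨N, fun m hm n hn => ?_⟩
  have hgε : ∀ k, AEStronglyMeasurable (ε' • g k) μ := fun k => (hg k).const_smul ε'
  have hbound : ∀ᵐ x ∂μ, ‖(f m - f n) x‖ ≤ (ε' • g m + ε' • g n + C • fun x => ‖h m x - h n x‖) x :=
    (hC m n).mono fun x hx => hx.trans_eq <| by
      simp only [Pi.add_apply, Pi.smul_apply, smul_eq_mul]
      ring
  calc eLpNorm (f m - f n) p μ
      ≤ eLpNorm (ε' • g m + ε' • g n + C • fun x => ‖h m x - h n x‖) p μ :=
        eLpNorm_mono_ae_real hbound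
    _ ≤ eLpNorm (ε' • g m) p μ + eLpNorm (ε' • g n) p μ
          + eLpNorm (C • fun x => ‖h m x - h n x‖) p μ :=
        (eLpNorm_add_le ((hgε m).add (hgε n)) (((hh m).sub (hh n)).norm.const_smul C) hp).trans
          (add_le_add_left (eLpNorm_add_le (hgε m) (hgε n) hp) _)
    _ ≤ ENNReal.ofReal ε' * ENNReal.ofReal M + ENNReal.ofReal ε' * ENNReal.ofReal M
          + ENNReal.ofReal |C| * ENNReal.ofReal (ε / (2 * (|C| + 1))) := by
        simp only [eLpNorm_const_smul, Real.enorm_eq_ofReal_abs, abs_of_pos hε', eLpNorm_norm]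
        gcongr
        exacts [hgM m, hgM n, hN m hm n hn]
    _ ≤ ENNReal.ofReal ε := by
        rw [← ENNReal.ofReal_mul hε'.le, ← ENNReal.ofReal_mul (abs_nonneg C),
          ← ENNReal.ofReal_add (by positivity) (by positivity),
          ← ENNReal.ofReal_add (by positivity) (by positivity)]
        have hM' : ε' * M ≤ ε / 4 := by
          rw [div_mul_eq_mul_div, div_le_div_iff₀ (by positivity) (by positivity)]
          nlinarith
        have hC' : |C| * (ε / (2 * (|C| + 1))) ≤ ε / 2 := by
          rw [mul_div_assoc', div_le_div_iff₀ (by positivity) (by positivity)]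
          nlinarith [abs_nonneg C]
        exact ENNReal.ofReal_le_ofReal (by linarith)

end Lp

section Cone

variable {A₀ A₁ : Type*} [NormedAddCommGroup A₀] [NormedSpace ℝ A₀]
  [NormedAddCommGroup A₁] [NormedSpace ℝ A₁] {S : Set A₀} {ν : A₀ → ℝ}

theorem exists_norm_sub_le_mul_add_mul_norm_sub [CompleteSpace A₀] (ι : A₀ →L[ℝ] A₁)
    (hι : Function.Injective ι) (hcone : ∀ φ ∈ S, ∀ c : ℝ, 0 ≤ c → c • φ ∈ S)
    (hν0 : ∀ φ ∈ S, 0 ≤ ν φ) (hνhom : ∀ φ ∈ S, ∀ c : ℝ, 0 ≤ c → ν (c • φ) = c * ν φ)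
    {K₀ : ℝ} (hK₀ : ∀ φ ∈ S, ‖φ‖ ≤ K₀ * ν φ) (hS₁ : TotallyBounded {φ ∈ S | ν φ ≤ 1})
    {ε : ℝ} (hε : 0 < ε) :
    ∃ C, ∀ φ ∈ S, ∀ χ ∈ S, ‖φ - χ‖ ≤ ε * (ν φ + ν χ) + C * ‖ι φ - ι χ‖ := by
  obtain ⟨C, hC⟩ := (hS₁.closure.isCompact_of_isClosed isClosed_closure).exists_dist_le_add_mul_dist
    ι.continuous hι hε
  refine ⟨C, fun φ hφ χ hχ => ?_⟩
  rcases (add_nonneg (hν0 φ hφ) (hν0 χ hχ)).eq_or_lt with hs | hs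
  · have hνφ : ν φ = 0 := by linarith [hν0 φ hφ, hν0 χ hχ]
    have hνχ : ν χ = 0 := by linarith [hν0 φ hφ, hν0 χ hχ]
    have hφ0 : φ = 0 := norm_le_zero_iff.1 ((hK₀ φ hφ).trans_eq (by rw [hνφ, mul_zero]))
    have hχ0 : χ = 0 := norm_le_zero_iff.1 ((hK₀ χ hχ).trans_eq (by rw [hνχ, mul_zero]))
    rw [hνφ, hνχ, hφ0, hχ0]
    simp
  set s := ν φ + ν χ
  have hmem : ∀ ψ ∈ S, ν ψ ≤ s → s⁻¹ • ψ ∈ closure {φ ∈ S | ν φ ≤ 1} := fun ψ hψ hψs =>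
    subset_closure ⟨hcone ψ hψ _ (inv_nonneg.2 hs.le), by
      rw [hνhom ψ hψ _ (inv_nonneg.2 hs.le), inv_mul_le_one₀ hs]; exact hψs⟩
  have h := hC _ (hmem φ hφ (by linarith [hν0 χ hχ])) _ (hmem χ hχ (by linarith [hν0 φ hφ]))
  rw [dist_eq_norm, dist_eq_norm, ← smul_sub, map_smul, map_smul, ← smul_sub, norm_smul,
    norm_smul, Real.norm_of_nonneg (inv_nonneg.2 hs.le)] at h
  have hs0 : s ≠ 0 := hs.ne'
  calc ‖φ - χ‖ = s * (s⁻¹ * ‖φ - χ‖) := by field_simp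
    _ ≤ s * (ε + C * (s⁻¹ * ‖ι φ - ι χ‖)) := by gcongr
    _ = ε * s + C * ‖ι φ - ι χ‖ := by field_simp

theorem exists_tendsto_eLpNorm_sub_of_cauchy_eLpNorm_comp [CompleteSpace A₀] (ι : A₀ →L[ℝ] A₁)
    (hι : Function.Injective ι) (hcone : ∀ φ ∈ S, ∀ c : ℝ, 0 ≤ c → c • φ ∈ S)
    (hν0 : ∀ φ ∈ S, 0 ≤ ν φ) (hνhom : ∀ φ ∈ S, ∀ c : ℝ, 0 ≤ c → ν (c • φ) = c * ν φ)
    {K₀ : ℝ} (hK₀ : ∀ φ ∈ S, ‖φ‖ ≤ K₀ * ν φ) (hS₁ : TotallyBounded {φ ∈ S | ν φ ≤ 1})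
    {α : Type*} [MeasurableSpace α] {μ : Measure α} {p : ℝ≥0∞} (hp : 1 ≤ p) {u : ℕ → α → A₀}
    (hu : ∀ n, ∀ᵐ x ∂μ, u n x ∈ S) (humeas : ∀ n, AEStronglyMeasurable (u n) μ)
    (hν : ∀ n, AEStronglyMeasurable (fun x => ν (u n x)) μ) {M : ℝ} (hM : 0 ≤ M)
    (hνM : ∀ n, eLpNorm (fun x => ν (u n x)) p μ ≤ ENNReal.ofReal M)
    (hcauchy : ∀ η > 0, ∃ N, ∀ m ≥ N, ∀ n ≥ N,
      eLpNorm (fun x => ι (u m x) - ι (u n x)) p μ ≤ ENNReal.ofReal η) :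
    ∃ g : α → A₀, Tendsto (fun n => eLpNorm (u n - g) p μ) atTop (𝓝 0) := by
  refine exists_tendsto_eLpNorm_sub_of_cauchy hp (fun n => ?_)
    (cauchy_eLpNorm_of_ae_norm_sub_le_add_mul hp hM hν hνM
      (fun n => ι.continuous.comp_aestronglyMeasurable (humeas n)) (fun ε hε => ?_) hcauchy)
  · refine .of_le_mul (c := K₀) ⟨hν n, (hνM n).trans_lt ENNReal.ofReal_lt_top⟩ (humeas n) ?_
    filter_upwards [hu n] with x hx
    rw [Real.norm_of_nonneg (hν0 _ hx)]
    exact hK₀ _ hx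
  · obtain ⟨C, hC⟩ := exists_norm_sub_le_mul_add_mul_norm_sub ι hι hcone hν0 hνhom hK₀ hS₁ hε
    exact ⟨C, fun m n => by filter_upwards [hu m, hu n] with x hm hn using hC _ hm _ hn⟩

theorem exists_strictMono_forall_ae_norm_sub_le [CompleteSpace A₁] (ι : A₀ →L[ℝ] A₁)
    (hS : ∀ R, TotallyBounded {φ ∈ S | ν φ ≤ R}) {a b : ℝ} (hab : a < b) {q : ℝ≥0∞}
    (hq : 1 < q) {p : ℝ≥0∞} (hp : 1 ≤ p) {M : ℝ} (hM : 0 ≤ M)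
    {u : ℕ → ℝ → A₀} {x : ℕ → A₁} {w : ℕ → ℝ → A₁}
    (hw : ∀ n, IntegrableOn (w n) (Ioc a b))
    (hwM : ∀ n, eLpNorm (w n) q (volume.restrict (Ioc a b)) ≤ ENNReal.ofReal M)
    (hν : ∀ n, AEMeasurable (fun t => ν (u n t)) (volume.restrict (Ioc a b)))
    (hνM : ∀ n, eLpNorm (fun t => ν (u n t)) p (volume.restrict (Ioc a b)) ≤ ENNReal.ofReal M)
    (hu : ∀ n, ∀ᵐ t ∂volume.restrict (Ioc a b),
      u n t ∈ S ∧ ι (u n t) = x n + ∫ s in a..t, w n s) :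
    ∃ ψ : ℕ → ℕ, StrictMono ψ ∧ ∀ η > 0, ∃ N, ∀ m ≥ N, ∀ n ≥ N,
      ∀ᵐ t ∂volume.restrict (Ioc a b), ‖ι (u (ψ m) t) - ι (u (ψ n) t)‖ ≤ η := by
  set v : ℕ → ℝ → A₁ := fun n t => x n + ∫ s in a..t, w n s
  set θ := 1 - q.toReal⁻¹
  have hθ : 0 < θ := sub_pos.2 (ENNReal.toReal_inv_lt_one hq)
  have hmod : ∀ n, ∀ s ∈ Icc a b, ∀ t ∈ Icc a b, dist (v n s) (v n t) ≤ M * dist s t ^ θ :=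
    fun n s hs t ht => by
      rw [dist_eq_norm, add_sub_add_left_eq_sub, Real.dist_eq]
      exact norm_intervalIntegral_sub_le_s8 hq.le hM (hw n) (hwM n) ht hs
  have hω : Tendsto (fun r : ℝ => M * r ^ θ) (𝓝 0) (𝓝 0) := by
    simpa [Real.zero_rpow hθ.ne'] using
      ((Real.continuous_rpow_const hθ.le).tendsto 0).const_mul M
  have hgood : ∀ δ > 0, ∃ Q : Set A₁, TotallyBounded Q ∧
      ∀ n, ∀ c, a ≤ c → c + δ ≤ b → ∃ s ∈ Ioc c (c + δ), v n s ∈ Q := fun δ hδ => by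
    obtain ⟨R, hR⟩ := exists_forall_exists_mem_Ioc_lt_and hp hν hνM hu hδ
    refine ⟨ι '' {φ ∈ S | ν φ ≤ R}, (hS R).image ι.uniformContinuous, fun n c hac hcb => ?_⟩
    obtain ⟨s, hs, hνs, hsS, hιs⟩ := hR n c hac hcb
    exact ⟨s, hs, u n s, ⟨hsS, hνs.le⟩, hιs⟩
  obtain ⟨ψ, hψ, G, hG⟩ := exists_strictMono_tendstoUniformly_of_equicontinuous
    (F := fun n (t : Icc a b) => v n t)
    (equicontinuous_of_continuity_modulus _ hω _ fun s t n => hmod n s s.2 t t.2)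
    (totallyBounded_iUnion_range_of_forall_exists_mem hab hω hmod hgood)
  refine ⟨ψ, hψ, fun η hη => ?_⟩
  obtain ⟨N, hN⟩ :=
    Metric.uniformCauchySeqOn_iff.1 (tendstoUniformlyOn_univ.2 hG).uniformCauchySeqOn η hη
  refine ⟨N, fun m hm n hn => ?_⟩
  filter_upwards [ae_restrict_mem measurableSet_Ioc, hu (ψ m), hu (ψ n)] with t ht hm' hn'
  rw [hm'.2, hn'.2, ← dist_eq_norm]
  exact (hN m hm n hn ⟨t, Ioc_subset_Icc_self ht⟩ (mem_univ _)).le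

end Cone

theorem stmt8_general
    {A₀ A₁ : Type*} [NormedAddCommGroup A₀] [NormedSpace ℝ A₀] [CompleteSpace A₀]
    [NormedAddCommGroup A₁] [NormedSpace ℝ A₁] [CompleteSpace A₁]
    -- A₀ is continuously embedded in A₁ via the injective linear map `ι`
    (ι : A₀ →ₗ[ℝ] A₁) (hι : Function.Injective ι)
    (C : ℝ) (hιC : ∀ a : A₀, ‖ι a‖ ≤ C * ‖a‖)
    (T : ℝ) (hT : 0 < T)
    -- M₊ = S is a seminormed nonnegative cone in A₀ with seminorm ν
    (S : Set A₀) (ν : A₀ → ℝ)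
    (hcone : ∀ φ ∈ S, ∀ c : ℝ, 0 ≤ c → c • φ ∈ S)
    (hν0 : ∀ φ ∈ S, 0 ≤ ν φ)
    (hνhom : ∀ φ ∈ S, ∀ c : ℝ, 0 ≤ c → ν (c • φ) = c * ν φ)
    -- M₊ is embedded in A₀
    (hemb : ∃ K₀ > (0 : ℝ), ∀ φ ∈ S, ‖φ‖ ≤ K₀ * ν φ)
    -- the embedding of M₊ in A₀ is compact
    (hcpt : ∀ a : ℕ → A₀, (∀ n, a n ∈ S) → (∃ K : ℝ, ∀ n, ν (a n) ≤ K) →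
      ∃ (ψ : ℕ → ℕ) (l : A₀), StrictMono ψ ∧
        Tendsto (fun n => a (ψ n)) atTop (𝓝 l))
    -- 1 ≤ p ≤ ∞ and 1 < p₁ ≤ ∞
    (p p₁ : ℝ≥0∞) (hp : 1 ≤ p) (hp₁ : 1 < p₁)
    -- (u_n) is a sequence in Y₊, with derivatives (w_n) taking values in A₁
    (u : ℕ → ℝ → A₀) (w : ℕ → ℝ → A₁)
    (huS : ∀ n, ∀ t ∈ Set.Icc (0 : ℝ) T, u n t ∈ S)
    (humeas : ∀ n, AEStronglyMeasurable (u n) (volume.restrict (Set.Ioc (0 : ℝ) T)))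
    (hνmeas : ∀ n, AEMeasurable (fun t => ν (u n t)) (volume.restrict (Set.Ioc (0 : ℝ) T)))
    (hwint : ∀ n, IntegrableOn (w n) (Set.Ioc (0 : ℝ) T))
    (hrep : ∀ n, ∀ᵐ t ∂volume.restrict (Set.Icc (0 : ℝ) T),
      ι (u n t) = ι (u n 0) + ∫ s in (0 : ℝ)..t, w n s)
    -- the sequence is bounded in Y₊: sup_n [u_n]_{Y₊} < ∞
    (K : ℝ)
    (hbound : ∀ n,
      eLpNorm (fun t => ν (u n t)) p (volume.restrict (Set.Ioc (0 : ℝ) T))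
        + eLpNorm (w n) p₁ (volume.restrict (Set.Ioc (0 : ℝ) T)) ≤ ENNReal.ofReal K) :
    ∃ ψ : ℕ → ℕ, StrictMono ψ ∧
      ∃ g : ℝ → A₀,
        Tendsto
          (fun j => eLpNorm (fun t => u (ψ j) t - g t) p (volume.restrict (Set.Ioc (0 : ℝ) T)))
          atTop (𝓝 0) := by
  obtain ⟨K₀, -, hK₀⟩ := hemb
  let ι' : A₀ →L[ℝ] A₁ := ι.mkContinuous C hιC
  have hS : ∀ R, TotallyBounded {φ ∈ S | ν φ ≤ R} := fun R =>
    totallyBounded_of_forall_exists_cauchySeq fun a ha => by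
      obtain ⟨ψ, l, hψ, hl⟩ := hcpt a (fun n => (ha n).1) ⟨R, fun n => (ha n).2⟩
      exact ⟨ψ, hψ, hl.cauchySeq⟩
  have hνK : ∀ n, eLpNorm (fun t => ν (u n t)) p (volume.restrict (Ioc 0 T)) ≤
      ENNReal.ofReal (max K 0) := fun n =>
    le_self_add.trans ((hbound n).trans (ENNReal.ofReal_le_ofReal (le_max_left K 0)))
  have hwK : ∀ n, eLpNorm (w n) p₁ (volume.restrict (Ioc 0 T)) ≤ ENNReal.ofReal (max K 0) :=
    fun n => le_add_self.trans ((hbound n).trans (ENNReal.ofReal_le_ofReal (le_max_left K 0)))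
  have hu : ∀ n, ∀ᵐ t ∂volume.restrict (Ioc 0 T),
      u n t ∈ S ∧ ι' (u n t) = ι (u n 0) + ∫ s in (0 : ℝ)..t, w n s := fun n => by
    filter_upwards [ae_restrict_mem measurableSet_Ioc,
      ae_restrict_of_ae_restrict_of_subset Ioc_subset_Icc_self (hrep n)] with t ht hrep
    exact ⟨huS n t (Ioc_subset_Icc_self ht), hrep⟩
  obtain ⟨ψ, hψ, hA₁⟩ := exists_strictMono_forall_ae_norm_sub_le ι' hS hT hp₁ hp
    (le_max_right K 0) hwint hwK hνmeas hνK hu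
  exact ⟨ψ, hψ, exists_tendsto_eLpNorm_sub_of_cauchy_eLpNorm_comp ι' hι hcone hν0 hνhom hK₀ (hS 1)
    hp (fun n => (hu (ψ n)).mono fun _ h => h.1) (fun n => humeas (ψ n))
    (fun n => (hνmeas (ψ n)).aestronglyMeasurable) (le_max_right K 0) (fun n => hνK (ψ n))
    (cauchy_eLpNorm_of_ae_norm_sub_le p hA₁)⟩

/-- Dubinskiĭ's theorem, case (a): A₀ ↪ A₁ Banach spaces, M₊ a seminormed nonnegative
cone compactly embedded in A₀, 1 ≤ p ≤ ∞, 1 < p₁ ≤ ∞. Then Y₊ is compactly embedded in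
L^p(0,T;A₀): every [·]_{Y₊}-bounded sequence has a subsequence converging in L^p(0,T;A₀). -/
theorem stmt8
    {A₀ A₁ : Type*} [NormedAddCommGroup A₀] [NormedSpace ℝ A₀] [CompleteSpace A₀]
    [NormedAddCommGroup A₁] [NormedSpace ℝ A₁] [CompleteSpace A₁]
    -- A₀ is continuously embedded in A₁ via the injective linear map `ι`
    (ι : A₀ →ₗ[ℝ] A₁) (hι : Function.Injective ι)
    (C : ℝ) (hC : 0 < C) (hιC : ∀ a : A₀, ‖ι a‖ ≤ C * ‖a‖)
    (T : ℝ) (hT : 0 < T)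
    -- M₊ = S is a seminormed nonnegative cone in A₀ with seminorm ν
    (S : Set A₀) (ν : A₀ → ℝ)
    (hcone : ∀ φ ∈ S, ∀ c : ℝ, 0 ≤ c → c • φ ∈ S)
    (hν0 : ∀ φ ∈ S, 0 ≤ ν φ)
    (hνeq0 : ∀ φ ∈ S, (ν φ = 0 ↔ φ = 0))
    (hνhom : ∀ φ ∈ S, ∀ c : ℝ, 0 ≤ c → ν (c • φ) = c * ν φ)
    -- M₊ is embedded in A₀
    (hemb : ∃ K₀ > (0 : ℝ), ∀ φ ∈ S, ‖φ‖ ≤ K₀ * ν φ)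
    -- the embedding of M₊ in A₀ is compact
    (hcpt : ∀ a : ℕ → A₀, (∀ n, a n ∈ S) → (∃ K : ℝ, ∀ n, ν (a n) ≤ K) →
      ∃ (ψ : ℕ → ℕ) (l : A₀), StrictMono ψ ∧
        Tendsto (fun n => a (ψ n)) atTop (𝓝 l))
    -- 1 ≤ p ≤ ∞ and 1 < p₁ ≤ ∞
    (p p₁ : ℝ≥0∞) (hp : 1 ≤ p) (hp₁ : 1 < p₁)
    -- (u_n) is a sequence in Y₊, with derivatives (w_n) taking values in A₁
    (u : ℕ → ℝ → A₀) (w : ℕ → ℝ → A₁)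
    (huS : ∀ n, ∀ t ∈ Set.Icc (0 : ℝ) T, u n t ∈ S)
    (humeas : ∀ n, AEStronglyMeasurable (u n) (volume.restrict (Set.Ioc (0 : ℝ) T)))
    (hνmeas : ∀ n, AEMeasurable (fun t => ν (u n t)) (volume.restrict (Set.Ioc (0 : ℝ) T)))
    (hwint : ∀ n, IntegrableOn (w n) (Set.Ioc (0 : ℝ) T))
    (hrep : ∀ n, ∀ᵐ t ∂volume.restrict (Set.Icc (0 : ℝ) T),
      ι (u n t) = ι (u n 0) + ∫ s in (0 : ℝ)..t, w n s)
    -- the sequence is bounded in Y₊: sup_n [u_n]_{Y₊} < ∞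
    (K : ℝ)
    (hbound : ∀ n,
      eLpNorm (fun t => ν (u n t)) p (volume.restrict (Set.Ioc (0 : ℝ) T))
        + eLpNorm (w n) p₁ (volume.restrict (Set.Ioc (0 : ℝ) T)) ≤ ENNReal.ofReal K) :
    ∃ ψ : ℕ → ℕ, StrictMono ψ ∧
      ∃ g : ℝ → A₀,
        Tendsto
          (fun j => eLpNorm (fun t => u (ψ j) t - g t) p (volume.restrict (Set.Ioc (0 : ℝ) T)))
          atTop (𝓝 0) :=
  stmt8_general ι hι C hιC T hT S ν hcone hν0 hνhom hemb hcpt p p₁ hp hp₁ u w huS humeas hνmeas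
    hwint hrep K hbound
end

section
/- (Corollary of Maitre's theorem, case p₁ = 1.) Let T > 0, let A and A₁ be real Banach spaces, and let B : A → A₁ be a (possibly nonlinear) compact map, i.e. B maps bounded subsets of A to relatively compact subsets of A₁. Let U be a set of strongly measurable functions u : (0,T) → A with sup_{u ∈ U} ∫₀^T ‖u(t)‖_A dt < ∞, and let V := {B∘u : u ∈ U}. Assume V is bounded in L^r(0,T; A₁) for some r > 1, and that each v ∈ V satisfies v(t) = v(0) + ∫₀ᵗ w_v(s) ds for a.e. t ∈ [0,T], where w_v ∈ L¹(0,T; A₁) and sup_{v ∈ V} ∫₀^T ‖w_v(t)‖_{A₁} dt < ∞. Then for every p ∈ [1,∞), V is relatively compact in L^p(0,T; A₁): every sequence in V has a subsequence converging in the norm of L^p(0,T; A₁). -/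
open Filter Topology MeasureTheory
open scoped ENNReal

/-!
Modify each `v = B ∘ u` on a null set into the continuous function `F t = v 0 + ∫₀ᵗ w_v`; its
increments on `[s, t]` are bounded by `ν t - ν s`, where `ν`, the cumulative `L¹` norm of `w_v`,
is monotone with values in `[0, K]`. By Markov's inequality for `u`, every interval contains a
point where `F` lies in the compact set `closure (B '' ball 0 N)`, with `N` depending only on the
length of the interval. A diagonal extraction makes the `ν`'s converge at every rational and the
`F`'s converge at such a point of every interval with rational endpoints. Wherever the limit of
the `ν`'s has no jump, i.e. off a countable set, the `F`'s are then Cauchy; being uniformly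
bounded, they converge in `Lᵖ`.
-/

theorem Metric.cauchySeq_of_eventually_near_cauchySeq {X : Type*} [PseudoMetricSpace X]
    {x : ℕ → X}
    (h : ∀ ε > 0, ∃ y : ℕ → X, CauchySeq y ∧ ∀ᶠ j in atTop, dist (x j) (y j) ≤ ε) :
    CauchySeq x := by
  rw [Metric.cauchySeq_iff]
  intro ε hε
  obtain ⟨y, hy, hxy⟩ := h (ε / 4) (by positivity)
  obtain ⟨N₁, hN₁⟩ := Metric.cauchySeq_iff.1 hy (ε / 4) (by positivity)
  obtain ⟨N₂, hN₂⟩ := eventually_atTop.1 hxy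
  refine ⟨max N₁ N₂, fun m hm n hn => ?_⟩
  calc dist (x m) (x n) ≤ dist (x m) (y m) + dist (y m) (y n) + dist (y n) (x n) :=
        dist_triangle4 _ _ _ _
    _ < ε := by
      have := hN₂ m (le_of_max_le_right hm)
      have := hN₂ n (le_of_max_le_right hn)
      have := hN₁ m (le_of_max_le_left hm) n (le_of_max_le_left hn)
      rw [dist_comm (y n)]
      linarith

def NoJumpAt (L : ℚ → ℝ) (t : ℝ) : Prop :=
  ∀ ε > 0, ∀ δ > 0, ∃ a b : ℚ,
    (a : ℝ) ∈ Set.Ioo (t - δ) t ∧ (b : ℝ) ∈ Set.Ioo t (t + δ) ∧ L b - L a < ε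

theorem Monotone.countable_setOf_not_noJumpAt {L : ℚ → ℝ} (hL : Monotone L)
    (hbdd : BddAbove (Set.range L)) : {t | ¬NoJumpAt L t}.Countable := by
  have hne (t : ℝ) : Nonempty {q : ℚ // (q : ℝ) < t} :=
    let ⟨q, hq⟩ := exists_rat_lt t; ⟨⟨q, hq⟩⟩
  have hbdd' (t : ℝ) : BddAbove (Set.range fun q : {q : ℚ // (q : ℝ) < t} => L q) :=
    hbdd.mono (Set.range_comp_subset_range _ _)
  -- `L` has no jump at the continuity points of its left-continuous extension `G` to `ℝ`
  set G : ℝ → ℝ := fun t => ⨆ q : {q : ℚ // (q : ℝ) < t}, L q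
  have hG_mono : Monotone G := fun s t hst =>
    ciSup_le fun q => le_ciSup_of_le (hbdd' t) ⟨q, q.2.trans_le hst⟩ le_rfl
  have hLG {q : ℚ} {t : ℝ} (h : (q : ℝ) < t) : L q ≤ G t := le_ciSup (hbdd' t) ⟨q, h⟩
  have hGL (q : ℚ) : G q ≤ L q :=
    ciSup_le fun r => hL (by exact_mod_cast r.2.le)
  refine hG_mono.countable_not_continuousAt.mono fun t ht => ?_
  simp only [Set.mem_ofPred_eq] at ht ⊢
  intro hcont
  refine ht fun ε hε δ hδ => ?_
  obtain ⟨δ₀, hδ₀, hG⟩ := Metric.continuousAt_iff.1 hcont (ε / 2) (half_pos hε)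
  set η := min δ δ₀
  have hη : 0 < η := lt_min hδ hδ₀
  obtain ⟨a, ha₁, ha₂⟩ := exists_rat_btwn (show t - η < t by linarith)
  obtain ⟨b, hb₁, hb₂⟩ := exists_rat_btwn (show t < t + η by linarith)
  have hηδ : η ≤ δ := min_le_left _ _
  have hηδ₀ : η ≤ δ₀ := min_le_right _ _
  refine ⟨a, b, ⟨by linarith, ha₂⟩, ⟨hb₁, by linarith⟩, ?_⟩
  obtain ⟨s, hbs, hs⟩ := exists_between hb₂
  have hGs := hG (x := s) (by rw [Real.dist_eq, abs_lt]; constructor <;> linarith)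
  have hGa := hG (x := a) (by rw [Real.dist_eq, abs_lt]; constructor <;> linarith)
  rw [Real.dist_eq, abs_lt] at hGs hGa
  have := hLG (q := b) (t := s) (by linarith)
  have := hGL a
  linarith

def ControlsIncrements {X : Type*} [PseudoMetricSpace X] (ν : ℝ → ℝ) (f : ℝ → X) : Prop :=
  ∀ ⦃s t⦄, s ≤ t → dist (f s) (f t) ≤ ν t - ν s

namespace ControlsIncrements

variable {X : Type*} [PseudoMetricSpace X] {ν : ℝ → ℝ} {f : ℝ → X}

theorem monotone (h : ControlsIncrements ν f) : Monotone ν := fun _ _ hst =>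
  sub_nonneg.1 (dist_nonneg.trans (h hst))

theorem dist_le_of_mem_Icc (h : ControlsIncrements ν f) {a b s t : ℝ}
    (hs : s ∈ Set.Icc a b) (ht : t ∈ Set.Icc a b) : dist (f s) (f t) ≤ ν b - ν a := by
  wlog hst : s ≤ t generalizing s t
  · rw [dist_comm]; exact this ht hs (le_of_not_ge hst)
  have := h.monotone hs.1
  have := h.monotone ht.2
  linarith [h hst]

theorem dist_le (h : ControlsIncrements ν f) {K : ℝ} (hν : ∀ t, ν t ∈ Set.Icc 0 K)
    (s t : ℝ) : dist (f s) (f t) ≤ K := by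
  wlog hst : s ≤ t generalizing s t
  · rw [dist_comm]; exact this t s (le_of_not_ge hst)
  linarith [h hst, (hν t).2, (hν s).1]

theorem norm_le {E : Type*} [NormedAddCommGroup E] {f : ℝ → E}
    (h : ControlsIncrements ν f) {K R s : ℝ} (hν : ∀ t, ν t ∈ Set.Icc 0 K) (hs : ‖f s‖ ≤ R)
    (t : ℝ) : ‖f t‖ ≤ R + K := by
  have := h.dist_le hν s t
  rw [dist_eq_norm] at this
  calc ‖f t‖ ≤ ‖f s‖ + ‖f s - f t‖ := norm_le_norm_add_norm_sub _ _
    _ ≤ R + K := add_le_add hs this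

end ControlsIncrements

theorem exists_subseq_tendsto_of_controlsIncrements {X : Type*} [MetricSpace X] [CompleteSpace X]
    {f : ℕ → ℝ → X} {ν : ℕ → ℝ → ℝ} {K : ℝ} {O : Set ℝ} (hO : IsOpen O)
    (hν : ∀ n t, ν n t ∈ Set.Icc 0 K) (hf : ∀ n, ControlsIncrements (ν n) (f n))
    (hcpt : ∀ a b, a < b → Set.Ioo a b ⊆ O →
      ∃ C, IsCompact C ∧ ∀ n, ∃ s ∈ Set.Ioo a b, f n s ∈ C) :
    ∃ φ : ℕ → ℕ, StrictMono φ ∧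
      {t ∈ O | ¬∃ z, Tendsto (fun j => f (φ j) t) atTop (𝓝 z)}.Countable := by
  let P := {p : ℚ × ℚ // (p.1 : ℝ) < p.2 ∧ Set.Ioo (p.1 : ℝ) p.2 ⊆ O}
  choose C hC s hs using fun p : P => hcpt p.1.1 p.1.2 p.2.1 p.2.2
  -- one extraction makes `ν n` converge at every rational and `f n` converge at each chosen point
  obtain ⟨⟨L, Y⟩, hLY, φ, hφ, hlim⟩ :=
    ((isCompact_univ_pi fun _ : ℚ => isCompact_Icc (a := 0) (b := K)).prod
      (isCompact_univ_pi fun p : P => hC p)).tendsto_subseq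
      (x := fun n => (fun q : ℚ => ν n q, fun p : P => f n (s p n)))
      fun n => ⟨fun q _ => hν n q, fun p _ => (hs p n).2⟩
  have hL (q : ℚ) : Tendsto (fun j => ν (φ j) q) atTop (𝓝 (L q)) :=
    tendsto_pi_nhds.1 hlim.fst_nhds q
  have hY (p : P) : Tendsto (fun j => f (φ j) (s p (φ j))) atTop (𝓝 (Y p)) :=
    tendsto_pi_nhds.1 hlim.snd_nhds p
  have hL_mono : Monotone L := fun q r hqr =>
    le_of_tendsto_of_tendsto' (hL q) (hL r) fun j => (hf (φ j)).monotone (by exact_mod_cast hqr)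
  have hL_bdd : BddAbove (Set.range L) :=
    ⟨K, Set.forall_mem_range.2 fun q => le_of_tendsto' (hL q) fun j => (hν _ _).2⟩
  refine ⟨φ, hφ, (hL_mono.countable_setOf_not_noJumpAt hL_bdd).mono ?_⟩
  rintro t ⟨htO, ht⟩ hjump
  refine ht (cauchySeq_tendsto_of_complete
    (Metric.cauchySeq_of_eventually_near_cauchySeq fun ε hε => ?_))
  obtain ⟨δ, hδ, hball⟩ := Metric.isOpen_iff.1 hO t htO
  obtain ⟨a, b, ha, hb, hab⟩ := hjump ε hε δ hδ
  have hIoo : Set.Ioo (a : ℝ) b ⊆ O := fun x hx => hball <| by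
    rw [Real.ball_eq_Ioo]; exact ⟨ha.1.trans hx.1, hx.2.trans hb.2⟩
  let p : P := ⟨(a, b), ha.2.trans hb.1, hIoo⟩
  refine ⟨_, (hY p).cauchySeq, ?_⟩
  filter_upwards [((hL b).sub (hL a)).eventually_lt_const hab] with j hj
  have hsp := hs p (φ j)
  exact ((hf (φ j)).dist_le_of_mem_Icc ⟨ha.2.le, hb.1.le⟩ ⟨hsp.1.1.le, hsp.1.2.le⟩).trans hj.le

theorem integral_norm_le_toReal_of_eLpNorm_one_le {α E : Type*} [MeasurableSpace α]
    {μ : Measure α} [NormedAddCommGroup E] {f : α → E} (hf : AEStronglyMeasurable f μ)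
    {K : ℝ≥0∞} (hK : K ≠ ∞) (h : eLpNorm f 1 μ ≤ K) : ∫ x, ‖f x‖ ∂μ ≤ K.toReal := by
  rw [integral_norm_eq_lintegral_enorm hf, ← eLpNorm_one_eq_lintegral_enorm]
  exact ENNReal.toReal_mono hK h

section Primitive

variable {E : Type*} [NormedAddCommGroup E] {v w : ℝ → E} {T : ℝ}

theorem controlsIncrements_primitive [NormedSpace ℝ E] (hw : Integrable w) (c : E) :
    ControlsIncrements (fun t => ∫ x in Set.Iic t, ‖w x‖) (fun t => c + ∫ x in 0..t, w x) := by
  intro s t hst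
  rw [intervalIntegral.integral_Iic_sub_Iic hw.norm.integrableOn hw.norm.integrableOn,
    dist_eq_norm, add_sub_add_left_eq_sub, norm_sub_rev,
    intervalIntegral.integral_interval_sub_left hw.intervalIntegrable hw.intervalIntegrable]
  exact intervalIntegral.norm_integral_le_integral_norm hst

theorem integral_Iic_norm_mem_Icc (hw : Integrable w) (t : ℝ) :
    ∫ x in Set.Iic t, ‖w x‖ ∈ Set.Icc 0 (∫ x, ‖w x‖) :=
  ⟨setIntegral_nonneg measurableSet_Iic fun _ _ => norm_nonneg _,
    setIntegral_le_integral hw.norm (Eventually.of_forall fun _ => norm_nonneg _)⟩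

theorem ae_eq_primitive_indicator [NormedSpace ℝ E]
    (hv : ∀ᵐ t ∂volume.restrict (Set.Icc 0 T), v t = v 0 + ∫ s in 0..t, w s) :
    ∀ᵐ t ∂volume.restrict (Set.Ioc 0 T),
      v t = v 0 + ∫ s in 0..t, (Set.Ioc 0 T).indicator w s := by
  filter_upwards [ae_restrict_of_ae_restrict_of_subset Set.Ioc_subset_Icc_self hv,
    ae_restrict_mem measurableSet_Ioc] with t ht htT
  rw [ht]
  congr 1
  refine intervalIntegral.integral_congr_ae (ae_of_all _ fun s hs => ?_)
  rw [Set.uIoc_of_le htT.1.le] at hs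
  exact (Set.indicator_of_mem (show s ∈ Set.Ioc 0 T from ⟨hs.1, hs.2.trans htT.2⟩) w).symm

theorem exists_continuous_ae_eq_controlsIncrements [NormedSpace ℝ E] {K : ℝ≥0∞} (hK : K ≠ ∞)
    (hw : IntegrableOn w (Set.Ioc 0 T))
    (hv : ∀ᵐ t ∂volume.restrict (Set.Icc 0 T), v t = v 0 + ∫ s in 0..t, w s)
    (hwK : eLpNorm w 1 (volume.restrict (Set.Ioc 0 T)) ≤ K) :
    ∃ (F : ℝ → E) (ν : ℝ → ℝ), Continuous F ∧ v =ᵐ[volume.restrict (Set.Ioc 0 T)] F ∧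
      ControlsIncrements ν F ∧ ∀ t, ν t ∈ Set.Icc 0 K.toReal := by
  have hw' : Integrable ((Set.Ioc 0 T).indicator w) := hw.integrable_indicator measurableSet_Ioc
  refine ⟨_, _, continuous_const.add (hw'.continuous_primitive 0), ae_eq_primitive_indicator hv,
    controlsIncrements_primitive hw' (v 0), fun t => ?_⟩
  refine Set.Icc_subset_Icc_right ?_ (integral_Iic_norm_mem_Icc hw' t)
  simp only [norm_indicator_eq_indicator_norm, integral_indicator measurableSet_Ioc]
  exact integral_norm_le_toReal_of_eLpNorm_one_le hw.1 hK hwK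

end Primitive

theorem exists_mem_image_ball_of_lintegral_le {α A E : Type*} [MeasurableSpace α]
    {μ : Measure α} [NormedAddCommGroup A] (B : A → E) {u : α → A} {F : α → E}
    (hu : AEStronglyMeasurable u μ) {K : ℝ≥0∞} (hK : ∫⁻ x, ‖u x‖ₑ ∂μ ≤ K)
    (hF : ∀ᵐ x ∂μ, B (u x) = F x) {S : Set α} {N : ℕ} (hN : K < N * μ S) :
    ∃ x ∈ S, F x ∈ B '' Metric.ball 0 N := by
  by_contra! h
  have hS : S ⊆ {x | (N : ℝ≥0∞) ≤ ‖u x‖ₑ} ∪ {x | B (u x) ≠ F x} := by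
    intro x hx
    by_contra! hx'
    simp only [Set.mem_union, Set.mem_ofPred_eq, not_or, not_le, not_not] at hx'
    refine h x hx ⟨u x, ?_, hx'.2⟩
    rw [mem_ball_zero_iff, ← ofReal_norm, ← ENNReal.ofReal_natCast] at *
    exact (ENNReal.ofReal_lt_ofReal_iff_of_nonneg (norm_nonneg _)).1 hx'.1
  have hS' : μ S ≤ μ {x | (N : ℝ≥0∞) ≤ ‖u x‖ₑ} :=
    (measure_mono hS).trans ((measure_union_le _ _).trans (by rw [ae_iff.1 hF, add_zero]))
  have := mul_meas_ge_le_lintegral₀ hu.enorm (N : ℝ≥0∞)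
  have : (N : ℝ≥0∞) * μ S ≤ N * μ {x | (N : ℝ≥0∞) ≤ ‖u x‖ₑ} := by gcongr
  exact (hN.trans_le (by order)).false

theorem exists_isCompact_forall_exists_mem {α ι A E : Type*} [MeasurableSpace α]
    {μ : Measure α} [NormedAddCommGroup A] [TopologicalSpace E] {B : A → E}
    (hB : ∀ s : Set A, Bornology.IsBounded s → IsCompact (closure (B '' s)))
    {u : ι → α → A} {F : ι → α → E} (hu : ∀ i, AEStronglyMeasurable (u i) μ) {K : ℝ≥0∞}
    (hK_top : K ≠ ∞) (hK : ∀ i, ∫⁻ x, ‖u i x‖ₑ ∂μ ≤ K) (hF : ∀ i, ∀ᵐ x ∂μ, B (u i x) = F i x)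
    {S : Set α} (hS : μ S ≠ 0) : ∃ C, IsCompact C ∧ ∀ i, ∃ x ∈ S, F i x ∈ C := by
  obtain ⟨N, hN⟩ := ENNReal.exists_nat_mul_gt hS hK_top
  refine ⟨_, hB (Metric.ball 0 N) Metric.isBounded_ball, fun i => ?_⟩
  obtain ⟨x, hxS, hx⟩ := exists_mem_image_ball_of_lintegral_le B (hu i) (hK i) (hF i) hN
  exact ⟨x, hxS, subset_closure hx⟩

section DominatedLp

variable {α E : Type*} [MeasurableSpace α] {μ : Measure α} [NormedAddCommGroup E]
  {p : ℝ≥0∞} {C : ℝ}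

theorem unifIntegrable_of_ae_norm_le {ι : Type*} (hp : 1 ≤ p) (hp' : p ≠ ∞) {f : ι → α → E}
    (hf : ∀ i, AEStronglyMeasurable (f i) μ) (hC : ∀ i, ∀ᵐ x ∂μ, ‖f i x‖ ≤ C) :
    UnifIntegrable f p μ := by
  refine unifIntegrable_of hp hp' hf fun ε hε => ⟨C.toNNReal + 1, fun i => ?_⟩
  have : {x | C.toNNReal + 1 ≤ ‖f i x‖₊}.indicator (f i) =ᵐ[μ] 0 := by
    filter_upwards [hC i] with x hx
    refine Set.indicator_of_notMem (fun hx' => ?_) _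
    have : C.toNNReal + 1 ≤ ‖f i x‖ := by exact_mod_cast hx'
    linarith [C.le_coe_toNNReal]
  rw [eLpNorm_congr_ae this, eLpNorm_zero]
  exact zero_le

theorem tendsto_eLpNorm_sub_of_tendsto_ae_of_ae_norm_le [IsFiniteMeasure μ] (hp : 1 ≤ p)
    (hp' : p ≠ ∞) {f : ℕ → α → E} {g : α → E} (hf : ∀ n, AEStronglyMeasurable (f n) μ)
    (hC : ∀ n, ∀ᵐ x ∂μ, ‖f n x‖ ≤ C)
    (hfg : ∀ᵐ x ∂μ, Tendsto (fun n => f n x) atTop (𝓝 (g x))) :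
    Tendsto (fun n => eLpNorm (f n - g) p μ) atTop (𝓝 0) := by
  have hg : AEStronglyMeasurable g μ := aestronglyMeasurable_of_tendsto_ae atTop hf hfg
  have hgC : ∀ᵐ x ∂μ, ‖g x‖ ≤ C := by
    filter_upwards [hfg, ae_all_iff.2 hC] with x hx hxC
    exact le_of_tendsto' hx.norm hxC
  exact tendsto_Lp_finite_of_tendsto_ae hp hp' hf (MemLp.of_bound hg C hgC)
    (unifIntegrable_of_ae_norm_le hp hp' hf hC) hfg

end DominatedLp

theorem stmt14_general
    {A A₁ : Type*} [NormedAddCommGroup A]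
    [NormedAddCommGroup A₁] [NormedSpace ℝ A₁] [CompleteSpace A₁]
    (T : ℝ) (hT : 0 < T)
    (B : A → A₁)
    -- B is a compact map: it maps bounded sets to relatively compact sets
    (hB : ∀ s : Set A, Bornology.IsBounded s → IsCompact (closure (B '' s)))
    (U : Set (ℝ → A))
    -- the elements of U are strongly measurable on (0,T)
    (hUmeas : ∀ u ∈ U, AEStronglyMeasurable u (volume.restrict (Set.Ioc (0 : ℝ) T)))
    -- U is bounded in L¹(0,T;A)
    (hU1 : ∃ K : ℝ, ∀ u ∈ U,
      ∫⁻ t in Set.Ioc (0 : ℝ) T, (‖u t‖₊ : ℝ≥0∞) ≤ ENNReal.ofReal K)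
    -- each v = B∘u ∈ V satisfies v(t) = v(0) + ∫₀ᵗ w_v(s) ds with w_v ∈ L¹(0,T;A₁),
    -- and sup_{v ∈ V} ‖w_v‖_{L¹(0,T;A₁)} < ∞
    (hW : ∃ K : ℝ, ∀ u ∈ U, ∃ w : ℝ → A₁,
      IntegrableOn w (Set.Ioc (0 : ℝ) T) ∧
      (∀ᵐ t ∂volume.restrict (Set.Icc (0 : ℝ) T),
        B (u t) = B (u 0) + ∫ s in (0 : ℝ)..t, w s) ∧
      eLpNorm w 1 (volume.restrict (Set.Ioc (0 : ℝ) T)) ≤ ENNReal.ofReal K) :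
    -- conclusion: for every p ∈ [1,∞), every sequence in V has a subsequence converging
    -- in the norm of L^p(0,T;A₁)
    ∀ p : ℝ≥0∞, 1 ≤ p → p ≠ ⊤ → ∀ u : ℕ → ℝ → A, (∀ n, u n ∈ U) →
      ∃ ψ : ℕ → ℕ, StrictMono ψ ∧ ∃ g : ℝ → A₁,
        Tendsto
          (fun j =>
            eLpNorm (fun t => B (u (ψ j) t) - g t) p (volume.restrict (Set.Ioc (0 : ℝ) T)))
          atTop (𝓝 0) := by
  intro p hp hp' u hu
  obtain ⟨K₁, hK₁⟩ := hU1
  obtain ⟨K, hK⟩ := hW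
  choose F ν hF_cont hF_ae hF hν using fun n =>
    let ⟨_, hw_int, hw_eq, hw_norm⟩ := hK (u n) (hu n)
    exists_continuous_ae_eq_controlsIncrements ENNReal.ofReal_ne_top hw_int hw_eq hw_norm
  set μ := volume.restrict (Set.Ioc (0 : ℝ) T)
  have hcpt (a b : ℝ) (hab : a < b) (hsub : Set.Ioo a b ⊆ Set.Ioo 0 T) :
      ∃ C, IsCompact C ∧ ∀ n, ∃ s ∈ Set.Ioo a b, F n s ∈ C := by
    refine exists_isCompact_forall_exists_mem hB (fun n => hUmeas _ (hu n)) ENNReal.ofReal_ne_top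
      (fun n => hK₁ _ (hu n)) hF_ae ?_
    rw [Measure.restrict_apply measurableSet_Ioo,
      Set.inter_eq_left.2 (hsub.trans Set.Ioo_subset_Ioc_self), Real.volume_Ioo]
    exact (ENNReal.ofReal_pos.2 (sub_pos.2 hab)).ne'
  obtain ⟨φ, hφ, hbad⟩ := exists_subseq_tendsto_of_controlsIncrements isOpen_Ioo hν hF hcpt
  obtain ⟨C, hC, hCF⟩ := hcpt 0 T hT subset_rfl
  choose s hs using hCF
  obtain ⟨R, hR⟩ := hC.isBounded.subset_closedBall 0
  have hF_bdd (n : ℕ) (t : ℝ) : ‖F n t‖ ≤ R + (ENNReal.ofReal K).toReal :=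
    (hF n).norm_le (hν n) (mem_closedBall_zero_iff.1 (hR (hs n).2)) t
  set g := fun t => limUnder atTop fun j => F (φ j) t
  have hlim : ∀ᵐ t ∂μ, Tendsto (fun j => F (φ j) t) atTop (𝓝 (g t)) := by
    filter_upwards [ae_restrict_mem measurableSet_Ioc,
      ae_restrict_of_ae ((hbad.insert T).ae_notMem volume)] with t ht htbad
    by_contra h
    exact htbad (Or.inr ⟨⟨ht.1, ht.2.lt_of_ne fun hT => htbad (Or.inl hT)⟩,
      fun hconv => h (tendsto_nhds_limUnder hconv)⟩)
  refine ⟨φ, hφ, g, (tendsto_eLpNorm_sub_of_tendsto_ae_of_ae_norm_le hp hp'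
    (fun j => (hF_cont (φ j)).aestronglyMeasurable) (fun j => ae_of_all _ (hF_bdd (φ j)))
    hlim).congr fun j => ?_⟩
  exact eLpNorm_congr_ae ((hF_ae (φ j)).symm.sub EventuallyEq.rfl)

/-- Corollary of Maitre's theorem, case p₁ = 1: if B : A → A₁ is a (possibly nonlinear)
compact map, U is bounded in L¹(0,T;A), V = B∘U is bounded in L^r(0,T;A₁) for some r > 1,
and dV/dt is bounded in L¹(0,T;A₁), then V is relatively compact in L^p(0,T;A₁) for every
p ∈ [1,∞). -/
theorem stmt14
    {A A₁ : Type*} [NormedAddCommGroup A] [NormedSpace ℝ A] [CompleteSpace A]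
    [NormedAddCommGroup A₁] [NormedSpace ℝ A₁] [CompleteSpace A₁]
    (T : ℝ) (hT : 0 < T)
    (B : A → A₁)
    -- B is a compact map: it maps bounded sets to relatively compact sets
    (hB : ∀ s : Set A, Bornology.IsBounded s → IsCompact (closure (B '' s)))
    (U : Set (ℝ → A))
    -- the elements of U are strongly measurable on (0,T)
    (hUmeas : ∀ u ∈ U, AEStronglyMeasurable u (volume.restrict (Set.Ioc (0 : ℝ) T)))
    -- U is bounded in L¹(0,T;A)
    (hU1 : ∃ K : ℝ, ∀ u ∈ U,
      ∫⁻ t in Set.Ioc (0 : ℝ) T, (‖u t‖₊ : ℝ≥0∞) ≤ ENNReal.ofReal K)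
    -- the elements of V = B∘U are strongly measurable on (0,T)
    (hVmeas : ∀ u ∈ U,
      AEStronglyMeasurable (fun t => B (u t)) (volume.restrict (Set.Ioc (0 : ℝ) T)))
    -- V is bounded in L^r(0,T;A₁) for some r > 1
    (hVr : ∃ r : ℝ≥0∞, 1 < r ∧ ∃ K : ℝ, ∀ u ∈ U,
      eLpNorm (fun t => B (u t)) r (volume.restrict (Set.Ioc (0 : ℝ) T)) ≤ ENNReal.ofReal K)
    -- each v = B∘u ∈ V satisfies v(t) = v(0) + ∫₀ᵗ w_v(s) ds with w_v ∈ L¹(0,T;A₁),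
    -- and sup_{v ∈ V} ‖w_v‖_{L¹(0,T;A₁)} < ∞
    (hW : ∃ K : ℝ, ∀ u ∈ U, ∃ w : ℝ → A₁,
      IntegrableOn w (Set.Ioc (0 : ℝ) T) ∧
      (∀ᵐ t ∂volume.restrict (Set.Icc (0 : ℝ) T),
        B (u t) = B (u 0) + ∫ s in (0 : ℝ)..t, w s) ∧
      eLpNorm w 1 (volume.restrict (Set.Ioc (0 : ℝ) T)) ≤ ENNReal.ofReal K) :
    -- conclusion: for every p ∈ [1,∞), every sequence in V has a subsequence converging
    -- in the norm of L^p(0,T;A₁)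
    ∀ p : ℝ≥0∞, 1 ≤ p → p ≠ ⊤ → ∀ u : ℕ → ℝ → A, (∀ n, u n ∈ U) →
      ∃ ψ : ℕ → ℕ, StrictMono ψ ∧ ∃ g : ℝ → A₁,
        Tendsto
          (fun j =>
            eLpNorm (fun t => B (u (ψ j) t) - g t) p (volume.restrict (Set.Ioc (0 : ℝ) T)))
          atTop (𝓝 0) :=
  stmt14_general T hT B hB U hUmeas hU1 hW
end
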